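/- arXiv:2410.10789 — 6 statements merged into one kernel-verified Lean document; each statement's English description precedes it below -/
import Mathlib

section
/- Let p ∈ (1,∞) with Hölder conjugate q, let d ≥ 2, and let F^p be the Fock space ⊕_{n≥0} ℓ^p_{d^n} (p-direct sum). For y ∈ ℓ^q_d define for each n ≥ 1 the map v_n(y) : ℓ^p_{d^n} → ℓ^p_{d^{n-1}} by v_n(y)(x ⊗ w) = (Σ_{j=1}^d y(j)x(j)) w on elementary tensors, and define the annihilation operator v(y) : F^p → F^p by v(y)(κ_n)_{n≥0} = (v_n(y)(κ_n))_{n≥1}. Then v(y) is a bounded linear operator with ‖v(y)‖ = ‖y‖_q. -/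
open scoped ENNReal

/-- The index set `I = ⊔_{n≥0} {1,…,d^n}` of the Fock space. -/
abbrev FockIndex (d : ℕ) := Σ n : ℕ, Fin (d ^ n)

/-- The Fock space `F^p = ℓ^p(I) = ⊕_{n≥0} ℓ^p_{d^n}` (p-direct sum). -/
noncomputable abbrev Fock (p : ℝ≥0∞) (d : ℕ) := lp (fun _ : FockIndex d => ℂ) p

/-- For `y ∈ ℓ^q_d` (`q` the Hölder conjugate of `p`), the annihilation
operator `v(y)(κ_n)_{n≥0} = (v_n(y)κ_n)_{n≥1}`, where `v_n(y)(x ⊗ w) = ⟨y,x⟩ w` on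
elementary tensors (coordinatewise: the coordinate `i` of level `n` of `v(y)κ` is
`Σ_{j<d} y(j) κ(n+1, j·dⁿ + i)`), is a bounded operator on `F^p` with
`‖v(y)‖ = ‖y‖_q`. -/
theorem annihilation_operator_norm
    (p q : ℝ≥0∞) [Fact (1 ≤ p)] (hp : 1 < p) (hp' : p ≠ ∞)
    (hpq : 1 / p + 1 / q = 1)
    (d : ℕ) (hd : 2 ≤ d)
    (y : PiLp q (fun _ : Fin d => ℂ))
    (V : Fock p d →L[ℂ] Fock p d)
    (hV : ∀ (κ : Fock p d) (n : ℕ) (i : Fin (d ^ n)),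
      (V κ) ⟨n, i⟩ = ∑ j : Fin d, y j *
        κ ⟨n + 1, ⟨j.val * d ^ n + i.val, by
          have hi := i.isLt
          have hj := j.isLt
          have h2 : j.val * d ^ n + i.val < (j.val + 1) * d ^ n := by
            rw [Nat.succ_mul]; omega
          have h3 : (j.val + 1) * d ^ n ≤ d ^ (n + 1) := by
            rw [pow_succ, Nat.mul_comm]
            exact Nat.mul_le_mul le_rfl (by omega)
          exact lt_of_lt_of_le h2 h3⟩⟩) :
    ‖V‖ = ‖y‖ := by
  classical
  have hp0 : p ≠ 0 := (zero_lt_one.trans hp).ne'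
  have hq_ne_top : q ≠ ∞ := by
    rintro rfl
    have hp1 : p = 1 := by
      simpa [one_div, ENNReal.inv_eq_one] using hpq
    exact hp.ne' hp1
  have hq0 : q ≠ 0 := by
    rintro rfl
    simp [ENNReal.div_zero, ENNReal.add_eq_top] at hpq
  have hpr1 : 1 < p.toReal := by
    have := (ENNReal.toReal_lt_toReal ENNReal.one_ne_top hp').mpr hp
    simpa using this
  have hpr0 : 0 < p.toReal := lt_trans one_pos hpr1
  have hconj : p.toReal.HolderConjugate q.toReal := by
    rw [Real.holderConjugate_iff]; constructor
    · exact hpr1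
    · have h3 := congrArg ENNReal.toReal hpq
      rw [one_div, one_div,
        ENNReal.toReal_add (by simp [hp0]) (by simp [hq0]),
        ENNReal.toReal_inv, ENNReal.toReal_inv] at h3
      simpa using h3
  have hqconj := hconj.symm
  have hqr0 : 0 < q.toReal := hqconj.pos
  have hqr1 : 1 < q.toReal := hqconj.lt
  have hynorm : ‖y‖ = (∑ j : Fin d, ‖y j‖ ^ q.toReal) ^ (1 / q.toReal) :=
    PiLp.norm_eq_sum hqr0 y
  have hyn : (0:ℝ) ≤ ‖y‖ := by
    rw [hynorm]
    exact Real.rpow_nonneg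
      (Finset.sum_nonneg fun j _ => Real.rpow_nonneg (norm_nonneg _) _) _
  -- the embedding of pairs into level-(n+1) coordinates
  have hlt : ∀ (n : ℕ) (i : Fin (d ^ n)) (j : Fin d),
      j.val * d ^ n + i.val < d ^ (n + 1) := by
    intro n i j
    have hi := i.isLt
    have hj := j.isLt
    have h2 : j.val * d ^ n + i.val < (j.val + 1) * d ^ n := by
      rw [Nat.succ_mul]; omega
    have h3 : (j.val + 1) * d ^ n ≤ d ^ (n + 1) := by
      rw [pow_succ, Nat.mul_comm]
      exact Nat.mul_le_mul le_rfl (by omega)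
    exact lt_of_lt_of_le h2 h3
  let e : (FockIndex d × Fin d) → FockIndex d := fun mj =>
    ⟨mj.1.1 + 1, ⟨mj.2.val * d ^ mj.1.1 + mj.1.2.val, hlt _ _ _⟩⟩
  have he_inj : Function.Injective e := by
    rintro ⟨⟨n, i⟩, j⟩ ⟨⟨n', i'⟩, j'⟩ h
    have h1 : n + 1 = n' + 1 := congrArg Sigma.fst h
    have hn : n = n' := by omega
    subst hn
    have h3 : j.val * d ^ n + i.val = j'.val * d ^ n + i'.val := by
      have := congrArg (fun m : FockIndex d => (m.2 : ℕ)) h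
      simpa [e] using this
    have hD : 0 < d ^ n := pow_pos (by omega) n
    have hi := i.isLt
    have hi' := i'.isLt
    have hj : j.val = j'.val := by
      have e1 : (d ^ n * j.val + i.val) / d ^ n = j.val := by
        rw [Nat.mul_add_div hD, Nat.div_eq_of_lt hi, add_zero]
      have e2 : (d ^ n * j'.val + i'.val) / d ^ n = j'.val := by
        rw [Nat.mul_add_div hD, Nat.div_eq_of_lt hi', add_zero]
      rw [Nat.mul_comm (j.val) (d ^ n), Nat.mul_comm (j'.val) (d ^ n)] at h3
      rw [← e1, ← e2, h3]
    have h4 : j.val * d ^ n = j'.val * d ^ n := by rw [hj]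
    have hii : i = i' := Fin.ext (by omega)
    have hjj : j = j' := Fin.ext hj
    subst hii; subst hjj; rfl
  -- coordinatewise bound via Hölder
  have hcoord : ∀ (κ : Fock p d) (n : ℕ) (i : Fin (d ^ n)),
      ‖(V κ) ⟨n, i⟩‖ ^ p.toReal ≤
        ‖y‖ ^ p.toReal * ∑ j : Fin d, ‖κ (e (⟨n, i⟩, j))‖ ^ p.toReal := by
    intro κ n i
    have hVe : (V κ) ⟨n, i⟩ = ∑ j : Fin d, y j * κ (e (⟨n, i⟩, j)) := hV κ n i
    rw [hVe]
    have hnn : (0:ℝ) ≤ ∑ j : Fin d, ‖κ (e (⟨n, i⟩, j))‖ ^ p.toReal :=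
      Finset.sum_nonneg fun j _ => Real.rpow_nonneg (norm_nonneg _) _
    have h1 : ‖∑ j : Fin d, y j * κ (e (⟨n, i⟩, j))‖ ≤
        ‖y‖ * (∑ j : Fin d, ‖κ (e (⟨n, i⟩, j))‖ ^ p.toReal) ^ (1 / p.toReal) := by
      calc ‖∑ j : Fin d, y j * κ (e (⟨n, i⟩, j))‖
          ≤ ∑ j : Fin d, ‖y j * κ (e (⟨n, i⟩, j))‖ := norm_sum_le _ _
        _ = ∑ j : Fin d, ‖y j‖ * ‖κ (e (⟨n, i⟩, j))‖ := by
            simp [norm_mul]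
        _ ≤ (∑ j : Fin d, ‖y j‖ ^ q.toReal) ^ (1 / q.toReal) *
              (∑ j : Fin d, ‖κ (e (⟨n, i⟩, j))‖ ^ p.toReal) ^ (1 / p.toReal) :=
            Real.inner_le_Lp_mul_Lq_of_nonneg Finset.univ hqconj
              (fun j _ => norm_nonneg _) (fun j _ => norm_nonneg _)
        _ = ‖y‖ * (∑ j : Fin d, ‖κ (e (⟨n, i⟩, j))‖ ^ p.toReal) ^ (1 / p.toReal) := by
            rw [← hynorm]
    calc ‖∑ j : Fin d, y j * κ (e (⟨n, i⟩, j))‖ ^ p.toReal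
        ≤ (‖y‖ * (∑ j : Fin d, ‖κ (e (⟨n, i⟩, j))‖ ^ p.toReal) ^ (1 / p.toReal)) ^ p.toReal :=
          Real.rpow_le_rpow (norm_nonneg _) h1 hpr0.le
      _ = ‖y‖ ^ p.toReal * ∑ j : Fin d, ‖κ (e (⟨n, i⟩, j))‖ ^ p.toReal := by
          rw [Real.mul_rpow hyn (Real.rpow_nonneg hnn _),
            ← Real.rpow_mul hnn, one_div, inv_mul_cancel₀ hpr0.ne', Real.rpow_one]
  -- upper bound
  have hub : ‖V‖ ≤ ‖y‖ := by
    refine V.opNorm_le_bound hyn fun κ => ?_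
    have hsum : Summable fun m : FockIndex d => ‖(V κ) m‖ ^ p.toReal :=
      (lp.memℓp (V κ)).summable hpr0
    have hκsum : Summable fun m : FockIndex d => ‖κ m‖ ^ p.toReal :=
      (lp.memℓp κ).summable hpr0
    have key : ‖V κ‖ ^ p.toReal ≤ ‖y‖ ^ p.toReal * ‖κ‖ ^ p.toReal := by
      rw [lp.norm_rpow_eq_tsum hpr0]
      refine hsum.tsum_le_of_sum_le fun s => ?_
      calc ∑ m ∈ s, ‖(V κ) m‖ ^ p.toReal
          ≤ ∑ m ∈ s, (‖y‖ ^ p.toReal * ∑ j : Fin d, ‖κ (e (m, j))‖ ^ p.toReal) := by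
            refine Finset.sum_le_sum fun m _ => ?_
            obtain ⟨n, i⟩ := m
            exact hcoord κ n i
        _ = ‖y‖ ^ p.toReal * ∑ m ∈ s, ∑ j : Fin d, ‖κ (e (m, j))‖ ^ p.toReal := by
            rw [Finset.mul_sum]
        _ ≤ ‖y‖ ^ p.toReal * ‖κ‖ ^ p.toReal := by
            refine mul_le_mul_of_nonneg_left ?_ (Real.rpow_nonneg hyn _)
            rw [lp.norm_rpow_eq_tsum hpr0]
            have hps : ∑ m ∈ s, ∑ j : Fin d, ‖κ (e (m, j))‖ ^ p.toReal
                = ∑ mj ∈ s ×ˢ (Finset.univ : Finset (Fin d)), ‖κ (e mj)‖ ^ p.toReal := by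
              rw [Finset.sum_product]
            rw [hps]
            have himg := Finset.sum_image (s := s ×ˢ (Finset.univ : Finset (Fin d)))
              (f := fun m' : FockIndex d => ‖κ m'‖ ^ p.toReal) (g := e)
              (fun a _ b _ h => he_inj h)
            rw [← himg]
            exact hκsum.sum_le_tsum _ (fun m' _ => Real.rpow_nonneg (norm_nonneg _) _)
    have h2 : ‖V κ‖ ^ p.toReal ≤ (‖y‖ * ‖κ‖) ^ p.toReal := by
      rw [Real.mul_rpow hyn (norm_nonneg _)]; exact key
    exact (Real.rpow_le_rpow_iff (norm_nonneg _)
      (mul_nonneg hyn (norm_nonneg _)) hpr0).mp h2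
  refine le_antisymm hub ?_
  by_cases hy : y = 0
  · have hy0 : ‖y‖ = 0 := by
      rw [hynorm]
      have : ∀ j : Fin d, ‖y j‖ ^ q.toReal = 0 := by
        intro j
        rw [hy]
        simp [Real.zero_rpow hqr0.ne']
      rw [Finset.sum_congr rfl fun j _ => this j, Finset.sum_const, smul_zero]
      exact Real.zero_rpow (ne_of_gt (one_div_pos.mpr hqr0))
    rw [hy0]
    exact norm_nonneg V
  -- lower bound : construct the extremal vector
  set x : Fin d → ℂ := fun j =>
    (starRingEnd ℂ) (y j) * ((‖y j‖ ^ (q.toReal - 2) : ℝ) : ℂ) with hx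
  set S : ℝ := ∑ j : Fin d, ‖y j‖ ^ q.toReal with hS
  have hSnn : 0 ≤ S := Finset.sum_nonneg fun j _ => Real.rpow_nonneg (norm_nonneg _) _
  have hSpos : 0 < S := by
    obtain ⟨j, hj⟩ : ∃ j, y j ≠ 0 := by
      by_contra h
      push_neg at h
      exact hy (by ext j; exact h j)
    refine Finset.sum_pos' (fun j _ => Real.rpow_nonneg (norm_nonneg _) _)
      ⟨j, Finset.mem_univ j, Real.rpow_pos_of_pos (norm_pos_iff.mpr hj) _⟩
  have hyx : ∀ j, y j * x j = ((‖y j‖ ^ q.toReal : ℝ) : ℂ) := by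
    intro j
    by_cases hj : y j = 0
    · simp [hx, hj, Real.zero_rpow hqr0.ne']
    · have hpos : (0:ℝ) < ‖y j‖ := norm_pos_iff.mpr hj
      have h1 : y j * x j = (Complex.normSq (y j) : ℂ) * ((‖y j‖ ^ (q.toReal - 2) : ℝ) : ℂ) := by
        rw [hx, ← mul_assoc, Complex.mul_conj]
      rw [h1, ← Complex.ofReal_mul]
      congr 1
      rw [Complex.normSq_eq_norm_sq,
        ← Real.rpow_natCast ‖y j‖ 2, ← Real.rpow_add hpos]
      norm_num
  have hxnorm : ∀ j, ‖x j‖ ^ p.toReal = ‖y j‖ ^ q.toReal := by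
    intro j
    by_cases hj : y j = 0
    · simp [hx, hj, Real.zero_rpow hpr0.ne', Real.zero_rpow hqr0.ne']
    · have hpos : (0:ℝ) < ‖y j‖ := norm_pos_iff.mpr hj
      have h1 : ‖x j‖ = ‖y j‖ ^ (q.toReal - 1) := by
        have hco : ‖((‖y j‖ ^ (q.toReal - 2) : ℝ) : ℂ)‖ = ‖y j‖ ^ (q.toReal - 2) := by
          rw [Complex.norm_real, Real.norm_eq_abs,
            abs_of_nonneg (Real.rpow_nonneg (norm_nonneg _) _)]
        show ‖(starRingEnd ℂ) (y j) * ((‖y j‖ ^ (q.toReal - 2) : ℝ) : ℂ)‖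
            = ‖y j‖ ^ (q.toReal - 1)
        rw [norm_mul, RCLike.norm_conj, hco]
        nth_rewrite 1 [← Real.rpow_one ‖y j‖]
        rw [← Real.rpow_add hpos]
        congr 1
        ring
      rw [h1, ← Real.rpow_mul (norm_nonneg (y j)), hqconj.sub_one_mul_conj]
  -- the extremal element of Fock space
  have hlt1 : ∀ j : Fin d, (j : ℕ) < d ^ 1 := fun j => by simp
  let idx : Fin d → FockIndex d := fun j => ⟨1, ⟨j, hlt1 j⟩⟩
  have hidx_inj : Function.Injective idx := by
    intro a b h
    exact Fin.ext (congrArg (fun m : FockIndex d => (m.2 : ℕ)) h)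
  let f : ∀ _ : FockIndex d, ℂ := fun m =>
    if h : m.1 = 1 then
      x ⟨m.2.val, by
        have := m.2.isLt
        exact this.trans_le (le_of_eq (by rw [h, pow_one]))⟩
    else 0
  let sfin : Finset (FockIndex d) := Finset.univ.map ⟨idx, hidx_inj⟩
  let κ : Fock p d := ∑ m ∈ sfin, lp.single p m (f m)
  have hf_idx : ∀ j : Fin d, f (idx j) = x j := by
    intro j
    show (if h : (1:ℕ) = 1 then _ else 0) = x j
    rw [dif_pos rfl]
  have hκ_apply : ∀ m : FockIndex d, (κ : ∀ _ : FockIndex d, ℂ) m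
      = if m ∈ sfin then f m else 0 := by
    intro m
    simp only [κ, lp.coeFn_sum, Finset.sum_apply, lp.single_apply, Finset.sum_dite_eq, Pi.single_apply, Finset.sum_ite_eq]
  have hκ_idx : ∀ j : Fin d, (κ : ∀ _ : FockIndex d, ℂ) (idx j) = x j := by
    intro j
    rw [hκ_apply, if_pos, hf_idx]
    simp [sfin]
  -- norm of κ
  have hκnorm_pow : ‖κ‖ ^ p.toReal = S := by
    show ‖∑ m ∈ sfin, lp.single p m (f m)‖ ^ p.toReal = S
    rw [lp.norm_sum_single hpr0 f sfin]
    rw [show sfin = Finset.univ.map ⟨idx, hidx_inj⟩ from rfl, Finset.sum_map]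
    simp only [Function.Embedding.coeFn_mk]
    rw [hS]
    refine Finset.sum_congr rfl fun j _ => ?_
    rw [hf_idx j, hxnorm j]
  have hκn : ‖κ‖ = S ^ (1 / p.toReal) := by
    rw [← hκnorm_pow, one_div, Real.rpow_rpow_inv (norm_nonneg _) hpr0.ne']
  -- evaluate V κ at the level-0 coordinate
  let i0 : Fin (d ^ 0) := ⟨0, by norm_num⟩
  have hidx_eq : ∀ j : Fin d,
      (⟨0 + 1, ⟨j.val * d ^ 0 + i0.val, hlt 0 i0 j⟩⟩ : FockIndex d) = idx j := by
    intro j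
    refine Sigma.ext rfl (heq_of_eq (Fin.ext ?_))
    simp [i0, idx]
  have hV0 : (V κ) ⟨0, i0⟩ = (S : ℂ) := by
    have hVe : (V κ) ⟨0, i0⟩ =
        ∑ j : Fin d, y j * (κ : ∀ _ : FockIndex d, ℂ)
          ⟨0 + 1, ⟨j.val * d ^ 0 + i0.val, hlt 0 i0 j⟩⟩ := hV κ 0 i0
    rw [hVe]
    have : ∀ j : Fin d, y j * (κ : ∀ _ : FockIndex d, ℂ)
        ⟨0 + 1, ⟨j.val * d ^ 0 + i0.val, hlt 0 i0 j⟩⟩ = ((‖y j‖ ^ q.toReal : ℝ) : ℂ) := by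
      intro j
      rw [hidx_eq j, hκ_idx j, hyx j]
    rw [Finset.sum_congr rfl fun j _ => this j, hS]
    push_cast
    rfl
  have hS_le : S ≤ ‖V κ‖ := by
    have h := lp.norm_apply_le_norm hp0 (V κ) ⟨0, i0⟩
    rw [hV0] at h
    rw [Complex.norm_real, Real.norm_eq_abs, abs_of_nonneg hSnn] at h
    exact h
  have hSp : 0 < S ^ (1 / p.toReal) := Real.rpow_pos_of_pos hSpos _
  have hfinal : S ≤ ‖V‖ * S ^ (1 / p.toReal) := by
    calc S ≤ ‖V κ‖ := hS_le
      _ ≤ ‖V‖ * ‖κ‖ := V.le_opNorm κ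
      _ = ‖V‖ * S ^ (1 / p.toReal) := by rw [hκn]
  have hsplit : S ^ (1 / q.toReal) * S ^ (1 / p.toReal) = S := by
    rw [← Real.rpow_add hSpos, one_div, one_div, add_comm, hconj.inv_add_inv_eq_one,
      Real.rpow_one]
  have hgoal : S ^ (1 / q.toReal) ≤ ‖V‖ := by
    rw [← mul_le_mul_iff_of_pos_right hSp, hsplit]
    exact hfinal
  rw [hynorm]
  exact hgoal
end

section
/- Let p ∈ (1,∞), let (Ω, μ) be a measure space, let ν be counting measure on ℤ_{≥0}, and let A ⊆ L(L^p(μ)) be an algebra of operators closed under a contractive automorphism φ_A with contractive inverse. For a ∈ A, define φ_A^∞(a) on L^p(ν × μ) = ℓ^p(ℤ_{≥0}) ⊗_p L^p(μ) by φ_A^∞(a)(x ⊗ ξ) = Σ_{n≥0} x(n) δ_n ⊗ φ_A^n(a)ξ. Then φ_A^∞(a) extends to a bounded operator on L^p(ν × μ) with ‖φ_A^∞(a)‖ = ‖a‖, and a ↦ φ_A^∞(a) is an isometric algebra homomorphism. -/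
open MeasureTheory
open scoped ENNReal

section DiagAux

variable {X : Type*} [NormedAddCommGroup X] [NormedSpace ℂ X] {p : ℝ≥0∞} [Fact (1 ≤ p)]

theorem diag_memℓp (hp : 0 < p.toReal) {T : ℕ → X →L[ℂ] X} {C : ℝ}
    (hT : ∀ n, ‖T n‖ ≤ C) (ξ : lp (fun _ : ℕ => X) p) :
    Memℓp (fun n => T n (ξ n)) p := by
  apply memℓp_gen
  have hC : 0 ≤ C := le_trans (norm_nonneg _) (hT 0)
  have hs : Summable fun n => C ^ p.toReal * ‖ξ n‖ ^ p.toReal :=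
    ((lp.memℓp ξ).summable hp).mul_left _
  refine hs.of_nonneg_of_le (fun n => Real.rpow_nonneg (norm_nonneg _) _) fun n => ?_
  rw [← Real.mul_rpow hC (norm_nonneg _)]
  exact Real.rpow_le_rpow (norm_nonneg _)
    (((T n).le_opNorm _).trans (mul_le_mul_of_nonneg_right (hT n) (norm_nonneg _))) hp.le

noncomputable def diagOp (hp : 0 < p.toReal) (T : ℕ → X →L[ℂ] X) (C : ℝ) (hC : 0 ≤ C)
    (hT : ∀ n, ‖T n‖ ≤ C) : lp (fun _ : ℕ => X) p →L[ℂ] lp (fun _ : ℕ => X) p :=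
  LinearMap.mkContinuous
    { toFun := fun ξ => ⟨fun n => T n (ξ n), diag_memℓp hp hT ξ⟩
      map_add' := fun ξ η => Subtype.ext (funext fun n => (T n).map_add _ _)
      map_smul' := fun c ξ => Subtype.ext (funext fun n => (T n).map_smul _ _) }
    C
    (by
      intro ξ
      refine lp.norm_le_of_tsum_le hp (mul_nonneg hC (lp.norm_nonneg' ξ)) ?_
      have hsum : Summable fun n => ‖T n (ξ n)‖ ^ p.toReal :=
        (diag_memℓp hp hT ξ).summable hp
      have hs : Summable fun n => C ^ p.toReal * ‖ξ n‖ ^ p.toReal :=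
        ((lp.memℓp ξ).summable hp).mul_left _
      calc (∑' n, ‖T n (ξ n)‖ ^ p.toReal)
          ≤ ∑' n, C ^ p.toReal * ‖ξ n‖ ^ p.toReal := by
            refine hsum.tsum_le_tsum (fun n => ?_) hs
            rw [← Real.mul_rpow hC (norm_nonneg _)]
            exact Real.rpow_le_rpow (norm_nonneg _)
              (((T n).le_opNorm _).trans
                (mul_le_mul_of_nonneg_right (hT n) (norm_nonneg _))) hp.le
        _ = C ^ p.toReal * ∑' n, ‖ξ n‖ ^ p.toReal := tsum_mul_left
        _ = (C * ‖ξ‖) ^ p.toReal := by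
            rw [← lp.norm_rpow_eq_tsum hp, Real.mul_rpow hC (lp.norm_nonneg' ξ)])

theorem diagOp_apply (hp : 0 < p.toReal) (T : ℕ → X →L[ℂ] X) (C : ℝ) (hC : 0 ≤ C)
    (hT : ∀ n, ‖T n‖ ≤ C) (ξ : lp (fun _ : ℕ => X) p) (n : ℕ) :
    (diagOp hp T C hC hT ξ) n = T n (ξ n) := rfl

theorem diagOp_norm_le (hp : 0 < p.toReal) (T : ℕ → X →L[ℂ] X) (C : ℝ) (hC : 0 ≤ C)
    (hT : ∀ n, ‖T n‖ ≤ C) : ‖diagOp hp T C hC hT‖ ≤ C :=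
  LinearMap.mkContinuous_norm_le _ hC _

end DiagAux

/-- Let `A ⊆ L(L^p(μ))` be an operator algebra closed under a
contractive automorphism `φ_A` with contractive inverse.  On
`L^p(ν × μ) = ℓ^p(ℤ_{≥0}) ⊗_p L^p(μ)` (realized as the `p`-direct sum of countably many
copies of `L^p(μ)`), the diagonal operator
`φ_A^∞(a)(x ⊗ ξ) = Σ_n x(n) δ_n ⊗ φ_A^n(a)ξ`, i.e. `(φ_A^∞(a)ξ)_n = φ_A^n(a)(ξ_n)`,
is bounded with `‖φ_A^∞(a)‖ = ‖a‖`, and `a ↦ φ_A^∞(a)` is an isometric algebra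
homomorphism. -/
theorem phi_infinity_isometric_algebra_hom
    {Ω : Type*} [MeasurableSpace Ω] (μ : Measure Ω)
    (p : ℝ≥0∞) [Fact (1 ≤ p)] (hp : 1 < p) (hp' : p ≠ ∞)
    (A : Set (Lp ℂ p μ →L[ℂ] Lp ℂ p μ))
    (hAadd : ∀ a ∈ A, ∀ b ∈ A, a + b ∈ A)
    (hAmul : ∀ a ∈ A, ∀ b ∈ A, a * b ∈ A)
    (hAsmul : ∀ z : ℂ, ∀ a ∈ A, z • a ∈ A)
    (φ ψ : (Lp ℂ p μ →L[ℂ] Lp ℂ p μ) → (Lp ℂ p μ →L[ℂ] Lp ℂ p μ))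
    (hφA : ∀ a ∈ A, φ a ∈ A) (hψA : ∀ a ∈ A, ψ a ∈ A)
    (hφ_contr : ∀ a ∈ A, ‖φ a‖ ≤ ‖a‖) (hψ_contr : ∀ a ∈ A, ‖ψ a‖ ≤ ‖a‖)
    (hφψ : ∀ a ∈ A, φ (ψ a) = a) (hψφ : ∀ a ∈ A, ψ (φ a) = a)
    (hφ_add : ∀ a ∈ A, ∀ b ∈ A, φ (a + b) = φ a + φ b)
    (hφ_mul : ∀ a ∈ A, ∀ b ∈ A, φ (a * b) = φ a * φ b)
    (hφ_smul : ∀ z : ℂ, ∀ a ∈ A, φ (z • a) = z • φ a) :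
    ∃ Φ : (Lp ℂ p μ →L[ℂ] Lp ℂ p μ) →
        (lp (fun _ : ℕ => Lp ℂ p μ) p →L[ℂ] lp (fun _ : ℕ => Lp ℂ p μ) p),
      -- the defining diagonal formula
      (∀ a ∈ A, ∀ (ξ : lp (fun _ : ℕ => Lp ℂ p μ) p) (n : ℕ),
        (Φ a ξ) n = (φ^[n] a) (ξ n)) ∧
      -- `Φ` is isometric on `A` …
      (∀ a ∈ A, ‖Φ a‖ = ‖a‖) ∧
      -- … and an algebra homomorphism on `A`
      (∀ a ∈ A, ∀ b ∈ A, Φ (a + b) = Φ a + Φ b) ∧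
      (∀ a ∈ A, ∀ b ∈ A, Φ (a * b) = Φ a ∘L Φ b) ∧
      (∀ z : ℂ, ∀ a ∈ A, Φ (z • a) = z • Φ a) := by
  classical
  have hpt : 0 < p.toReal := ENNReal.toReal_pos (zero_lt_one.trans hp).ne' hp'
  -- iterates stay in A
  have hiterA : ∀ a ∈ A, ∀ n, φ^[n] a ∈ A := by
    intro a ha n
    induction n with
    | zero => simpa using ha
    | succ n ih => rw [Function.iterate_succ_apply']; exact hφA _ ih
  -- iterates are contractive
  have hiter_norm : ∀ a ∈ A, ∀ n, ‖φ^[n] a‖ ≤ ‖a‖ := by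
    intro a ha n
    induction n with
    | zero => simp
    | succ n ih =>
      rw [Function.iterate_succ_apply']
      exact le_trans (hφ_contr _ (hiterA a ha n)) ih
  have hiter_add : ∀ n, ∀ a ∈ A, ∀ b ∈ A, φ^[n] (a + b) = φ^[n] a + φ^[n] b := by
    intro n
    induction n with
    | zero => intro a _ b _; simp
    | succ n ih =>
      intro a ha b hb
      rw [Function.iterate_succ_apply', Function.iterate_succ_apply',
        Function.iterate_succ_apply', ih a ha b hb]
      exact hφ_add _ (hiterA a ha n) _ (hiterA b hb n)
  have hiter_mul : ∀ n, ∀ a ∈ A, ∀ b ∈ A, φ^[n] (a * b) = φ^[n] a * φ^[n] b := by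
    intro n
    induction n with
    | zero => intro a _ b _; simp
    | succ n ih =>
      intro a ha b hb
      rw [Function.iterate_succ_apply', Function.iterate_succ_apply',
        Function.iterate_succ_apply', ih a ha b hb]
      exact hφ_mul _ (hiterA a ha n) _ (hiterA b hb n)
  have hiter_smul : ∀ n, ∀ z : ℂ, ∀ a ∈ A, φ^[n] (z • a) = z • φ^[n] a := by
    intro n
    induction n with
    | zero => intro z a _; simp
    | succ n ih =>
      intro z a ha
      rw [Function.iterate_succ_apply', Function.iterate_succ_apply', ih z a ha]
      exact hφ_smul z _ (hiterA a ha n)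
  refine ⟨fun a =>
    if h : a ∈ A then
      diagOp hpt (fun n => φ^[n] a) ‖a‖ (norm_nonneg a) (fun n => hiter_norm a h n)
    else 0, ?_, ?_, ?_, ?_, ?_⟩
  · intro a ha ξ n
    simp only [dif_pos ha]
    rfl
  · intro a ha
    simp only [dif_pos ha]
    set D := diagOp hpt (fun n => φ^[n] a) ‖a‖ (norm_nonneg a) (fun n => hiter_norm a ha n)
      with hD
    refine le_antisymm (diagOp_norm_le _ _ _ _ _) ?_
    refine ContinuousLinearMap.opNorm_le_bound a (norm_nonneg D) fun ξ => ?_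
    have key : D (lp.single (E := fun _ : ℕ => Lp ℂ p μ) p 0 ξ)
        = lp.single (E := fun _ : ℕ => Lp ℂ p μ) p 0 (a ξ) := by
      apply lp.ext
      funext n
      rw [hD, diagOp_apply]
      by_cases hn : n = 0
      · subst hn
        rw [lp.single_apply_self, lp.single_apply_self]
        simp
      · rw [lp.single_apply_ne p 0 _ hn, lp.single_apply_ne p 0 _ hn]
        simp
    have h1 : ‖lp.single (E := fun _ : ℕ => Lp ℂ p μ) p 0 (a ξ)‖ = ‖a ξ‖ :=
      lp.norm_single (E := fun _ : ℕ => Lp ℂ p μ) (zero_lt_one.trans hp : (0 : ℝ≥0∞) < p) 0 (a ξ)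
    have h2 : ‖lp.single (E := fun _ : ℕ => Lp ℂ p μ) p 0 ξ‖ = ‖ξ‖ :=
      lp.norm_single (E := fun _ : ℕ => Lp ℂ p μ) (zero_lt_one.trans hp : (0 : ℝ≥0∞) < p) 0 ξ
    calc ‖a ξ‖ = ‖D (lp.single (E := fun _ : ℕ => Lp ℂ p μ) p 0 ξ)‖ := by rw [key, h1]
      _ ≤ ‖D‖ * ‖lp.single (E := fun _ : ℕ => Lp ℂ p μ) p 0 ξ‖ := D.le_opNorm _
      _ = ‖D‖ * ‖ξ‖ := by rw [h2]
  · intro a ha b hb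
    simp only [dif_pos ha, dif_pos hb, dif_pos (hAadd a ha b hb)]
    refine ContinuousLinearMap.ext fun ξ => ?_
    apply lp.ext
    funext n
    have : (φ^[n] (a + b)) (ξ n) = (φ^[n] a) (ξ n) + (φ^[n] b) (ξ n) := by
      rw [hiter_add n a ha b hb]; rfl
    simpa [diagOp_apply] using this
  · intro a ha b hb
    simp only [dif_pos ha, dif_pos hb, dif_pos (hAmul a ha b hb)]
    refine ContinuousLinearMap.ext fun ξ => ?_
    apply lp.ext
    funext n
    have : (φ^[n] (a * b)) (ξ n) = (φ^[n] a) ((φ^[n] b) (ξ n)) := by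
      rw [hiter_mul n a ha b hb]; rfl
    simpa [diagOp_apply] using this
  · intro z a ha
    simp only [dif_pos ha, dif_pos (hAsmul z a ha)]
    refine ContinuousLinearMap.ext fun ξ => ?_
    apply lp.ext
    funext n
    have : (φ^[n] (z • a)) (ξ n) = z • (φ^[n] a) (ξ n) := by
      rw [hiter_smul n z a ha]; rfl
    simpa [diagOp_apply] using this
end

section
/- Let p ∈ (1,∞), let A ⊆ L(L^p(μ)) be an algebra with isometric automorphism φ_A. For a ∈ A define on L^p(ν × μ) (ν counting measure on ℤ_{≥0}): c_A(a)(x⊗ξ) = Σ_{n≥1}(sx)(n)δ_n ⊗ φ_A^{n−1}(a)ξ and v_A(a)(x⊗ξ) = Σ_{n≥0}(tx)(n)δ_n ⊗ φ_A^n(a)ξ, where s is right translation and t is left translation on ℓ^p(ℤ_{≥0}). Then for all a, b ∈ A: (1) c_A(ab) = c_A(a)φ_A^∞(b) and c_A(φ_A(a)b) = φ_A^∞(a)c_A(b); (2) v_A(ab) = φ_A^∞(a)v_A(b) and v_A(aφ_A(b)) = v_A(a)φ_A^∞(b); (3) v_A(a)c_A(b) = φ_A^∞(ab). -/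
open MeasureTheory
open scoped ENNReal

/-! All five operators act coordinatewise: `Φ a` is diagonal, `C a` a forward and `V a` a
backward weighted shift, each with weights `n ↦ φ^[n] a`. A composite of such operators is again
one of them, with the weights multiplied (and shifted by one index when a shift moves the
coordinates in between), and `φ^[n]` is multiplicative on `A`, so each relation reduces to an
identity between weight sequences. -/

theorem iterate_map_mul_of_mapsTo {M : Type*} [Mul M] {S : Set M} {f : M → M}
    (hf : Set.MapsTo f S S) (hmul : ∀ a ∈ S, ∀ b ∈ S, f (a * b) = f a * f b) :
    ∀ n, ∀ a ∈ S, ∀ b ∈ S, f^[n] (a * b) = f^[n] a * f^[n] b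
  | 0, _, _, _, _ => rfl
  | n + 1, a, ha, b, hb => by
    rw [Function.iterate_succ_apply', Function.iterate_succ_apply', Function.iterate_succ_apply',
      iterate_map_mul_of_mapsTo hf hmul n a ha b hb, hmul _ (hf.iterate n ha) _ (hf.iterate n hb)]

section WeightedShifts

variable {𝕜 E : Type*} [NormedField 𝕜] [NormedAddCommGroup E] [NormedSpace 𝕜 E]
  {p : ℝ≥0∞} [Fact (1 ≤ p)]

def IsDiagonalOperator (T : lp (fun _ : ℕ => E) p →L[𝕜] lp (fun _ : ℕ => E) p)
    (d : ℕ → E →L[𝕜] E) : Prop :=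
  ∀ ξ n, T ξ n = d n (ξ n)

def IsWeightedShift (T : lp (fun _ : ℕ => E) p →L[𝕜] lp (fun _ : ℕ => E) p)
    (w : ℕ → E →L[𝕜] E) : Prop :=
  (∀ ξ, T ξ 0 = 0) ∧ ∀ ξ n, T ξ (n + 1) = w n (ξ n)

def IsBackwardWeightedShift (T : lp (fun _ : ℕ => E) p →L[𝕜] lp (fun _ : ℕ => E) p)
    (w : ℕ → E →L[𝕜] E) : Prop :=
  ∀ ξ n, T ξ n = w n (ξ (n + 1))

variable {T S : lp (fun _ : ℕ => E) p →L[𝕜] lp (fun _ : ℕ => E) p}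
  {d w : ℕ → E →L[𝕜] E}

theorem IsDiagonalOperator.unique (hT : IsDiagonalOperator T d) (hS : IsDiagonalOperator S d) :
    T = S :=
  ContinuousLinearMap.ext fun ξ => lp.ext <| funext fun n => (hT ξ n).trans (hS ξ n).symm

theorem IsWeightedShift.unique (hT : IsWeightedShift T w) (hS : IsWeightedShift S w) : T = S :=
  ContinuousLinearMap.ext fun ξ => lp.ext <| funext fun
    | 0 => (hT.1 ξ).trans (hS.1 ξ).symm
    | n + 1 => (hT.2 ξ n).trans (hS.2 ξ n).symm

theorem IsBackwardWeightedShift.unique (hT : IsBackwardWeightedShift T w)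
    (hS : IsBackwardWeightedShift S w) : T = S :=
  ContinuousLinearMap.ext fun ξ => lp.ext <| funext fun n => (hT ξ n).trans (hS ξ n).symm

theorem IsWeightedShift.comp_diagonal (hT : IsWeightedShift T w) (hS : IsDiagonalOperator S d) :
    IsWeightedShift (T ∘L S) fun n => w n * d n :=
  ⟨fun ξ => hT.1 (S ξ), fun ξ n => by simp [hT.2, hS ξ n]⟩

theorem IsDiagonalOperator.comp_weightedShift (hT : IsDiagonalOperator T d)
    (hS : IsWeightedShift S w) : IsWeightedShift (T ∘L S) fun n => d (n + 1) * w n :=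
  ⟨fun ξ => by simp [hT _ 0, hS.1 ξ], fun ξ n => by simp [hT _ (n + 1), hS.2 ξ n]⟩

theorem IsDiagonalOperator.comp_backwardWeightedShift (hT : IsDiagonalOperator T d)
    (hS : IsBackwardWeightedShift S w) : IsBackwardWeightedShift (T ∘L S) fun n => d n * w n :=
  fun ξ n => by simp [hT _ n, hS ξ n]

theorem IsBackwardWeightedShift.comp_diagonal (hT : IsBackwardWeightedShift T w)
    (hS : IsDiagonalOperator S d) : IsBackwardWeightedShift (T ∘L S) fun n => w n * d (n + 1) :=
  fun ξ n => by simp [hT _ n, hS ξ (n + 1)]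

theorem IsBackwardWeightedShift.comp_weightedShift (hT : IsBackwardWeightedShift T w)
    (hS : IsWeightedShift S d) : IsDiagonalOperator (T ∘L S) fun n => w n * d n :=
  fun ξ n => by simp [hT _ n, hS.2 ξ n]

end WeightedShifts

theorem creation_annihilation_module_relations_general
    {Ω : Type*} [MeasurableSpace Ω] (μ : Measure Ω)
    (p : ℝ≥0∞) [Fact (1 ≤ p)]
    (A : Set (Lp ℂ p μ →L[ℂ] Lp ℂ p μ))
    (hAmul : ∀ a ∈ A, ∀ b ∈ A, a * b ∈ A)
    (φ : (Lp ℂ p μ →L[ℂ] Lp ℂ p μ) → (Lp ℂ p μ →L[ℂ] Lp ℂ p μ))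
    (hφA : ∀ a ∈ A, φ a ∈ A)
    (hφ_mul : ∀ a ∈ A, ∀ b ∈ A, φ (a * b) = φ a * φ b)
    (Φ C V : (Lp ℂ p μ →L[ℂ] Lp ℂ p μ) →
        (lp (fun _ : ℕ => Lp ℂ p μ) p →L[ℂ] lp (fun _ : ℕ => Lp ℂ p μ) p))
    (hΦ : ∀ a ∈ A, ∀ (ξ : lp (fun _ : ℕ => Lp ℂ p μ) p) (n : ℕ),
      (Φ a ξ) n = (φ^[n] a) (ξ n))
    (hCzero : ∀ a ∈ A, ∀ ξ : lp (fun _ : ℕ => Lp ℂ p μ) p, (C a ξ) 0 = 0)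
    (hCsucc : ∀ a ∈ A, ∀ (ξ : lp (fun _ : ℕ => Lp ℂ p μ) p) (n : ℕ),
      (C a ξ) (n + 1) = (φ^[n] a) (ξ n))
    (hVf : ∀ a ∈ A, ∀ (ξ : lp (fun _ : ℕ => Lp ℂ p μ) p) (n : ℕ),
      (V a ξ) n = (φ^[n] a) (ξ (n + 1))) :
    (∀ a ∈ A, ∀ b ∈ A,
        C (a * b) = C a ∘L Φ b ∧ C (φ a * b) = Φ a ∘L C b) ∧
    (∀ a ∈ A, ∀ b ∈ A,
        V (a * b) = Φ a ∘L V b ∧ V (a * φ b) = V a ∘L Φ b) ∧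
    (∀ a ∈ A, ∀ b ∈ A, V a ∘L C b = Φ (a * b)) := by
  have hweights : ∀ a ∈ A, ∀ b ∈ A,
      (fun n => φ^[n] (a * b)) = fun n => φ^[n] a * φ^[n] b :=
    fun a ha b hb => funext fun n => iterate_map_mul_of_mapsTo hφA hφ_mul n a ha b hb
  have hD : ∀ a ∈ A, IsDiagonalOperator (Φ a) fun n => φ^[n] a := hΦ
  have hC : ∀ a ∈ A, IsWeightedShift (C a) fun n => φ^[n] a :=
    fun a ha => ⟨hCzero a ha, hCsucc a ha⟩
  have hV : ∀ a ∈ A, IsBackwardWeightedShift (V a) fun n => φ^[n] a := hVf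
  refine ⟨fun a ha b hb => ⟨?_, ?_⟩, fun a ha b hb => ⟨?_, ?_⟩, fun a ha b hb => ?_⟩
  · exact (hC _ (hAmul a ha b hb)).unique
      (hweights a ha b hb ▸ (hC a ha).comp_diagonal (hD b hb))
  · have hΦC := (hD a ha).comp_weightedShift (hC b hb)
    simp only [Function.iterate_succ_apply] at hΦC
    exact (hC _ (hAmul _ (hφA a ha) b hb)).unique (hweights _ (hφA a ha) b hb ▸ hΦC)
  · exact (hV _ (hAmul a ha b hb)).unique
      (hweights a ha b hb ▸ (hD a ha).comp_backwardWeightedShift (hV b hb))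
  · have hVΦ := (hV a ha).comp_diagonal (hD b hb)
    simp only [Function.iterate_succ_apply] at hVΦ
    exact (hV _ (hAmul a ha _ (hφA b hb))).unique (hweights a ha _ (hφA b hb) ▸ hVΦ)
  · exact ((hV a ha).comp_weightedShift (hC b hb)).unique
      (hweights a ha b hb ▸ hD _ (hAmul a ha b hb))

/-- On `L^p(ν × μ) = ℓ^p(ℤ_{≥0}) ⊗_p L^p(μ)` (realized as the
`p`-direct sum of copies of `L^p(μ)`), let `φ_A^∞(a)`, the creation operators `c_A(a)`
and the annihilation operators `v_A(a)` be given componentwise by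
`(φ_A^∞(a)ξ)_n = φ_A^n(a)(ξ_n)`, `(c_A(a)ξ)_0 = 0`, `(c_A(a)ξ)_{n+1} = φ_A^n(a)(ξ_n)`,
`(v_A(a)ξ)_n = φ_A^n(a)(ξ_{n+1})`.  Then for `a, b ∈ A`:
(1) `c_A(ab) = c_A(a)φ_A^∞(b)` and `c_A(φ_A(a)b) = φ_A^∞(a)c_A(b)`;
(2) `v_A(ab) = φ_A^∞(a)v_A(b)` and `v_A(aφ_A(b)) = v_A(a)φ_A^∞(b)`;
(3) `v_A(a)c_A(b) = φ_A^∞(ab)`. -/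
theorem creation_annihilation_module_relations
    {Ω : Type*} [MeasurableSpace Ω] (μ : Measure Ω)
    (p : ℝ≥0∞) [Fact (1 ≤ p)] (hp : 1 < p) (hp' : p ≠ ∞)
    (A : Set (Lp ℂ p μ →L[ℂ] Lp ℂ p μ))
    (hAadd : ∀ a ∈ A, ∀ b ∈ A, a + b ∈ A)
    (hAmul : ∀ a ∈ A, ∀ b ∈ A, a * b ∈ A)
    (φ ψ : (Lp ℂ p μ →L[ℂ] Lp ℂ p μ) → (Lp ℂ p μ →L[ℂ] Lp ℂ p μ))
    (hφA : ∀ a ∈ A, φ a ∈ A) (hψA : ∀ a ∈ A, ψ a ∈ A)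
    (hφ_iso : ∀ a ∈ A, ‖φ a‖ = ‖a‖)
    (hφψ : ∀ a ∈ A, φ (ψ a) = a) (hψφ : ∀ a ∈ A, ψ (φ a) = a)
    (hφ_mul : ∀ a ∈ A, ∀ b ∈ A, φ (a * b) = φ a * φ b)
    (Φ C V : (Lp ℂ p μ →L[ℂ] Lp ℂ p μ) →
        (lp (fun _ : ℕ => Lp ℂ p μ) p →L[ℂ] lp (fun _ : ℕ => Lp ℂ p μ) p))
    (hΦ : ∀ a ∈ A, ∀ (ξ : lp (fun _ : ℕ => Lp ℂ p μ) p) (n : ℕ),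
      (Φ a ξ) n = (φ^[n] a) (ξ n))
    (hCzero : ∀ a ∈ A, ∀ ξ : lp (fun _ : ℕ => Lp ℂ p μ) p, (C a ξ) 0 = 0)
    (hCsucc : ∀ a ∈ A, ∀ (ξ : lp (fun _ : ℕ => Lp ℂ p μ) p) (n : ℕ),
      (C a ξ) (n + 1) = (φ^[n] a) (ξ n))
    (hVf : ∀ a ∈ A, ∀ (ξ : lp (fun _ : ℕ => Lp ℂ p μ) p) (n : ℕ),
      (V a ξ) n = (φ^[n] a) (ξ (n + 1))) :
    (∀ a ∈ A, ∀ b ∈ A,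
        C (a * b) = C a ∘L Φ b ∧ C (φ a * b) = Φ a ∘L C b) ∧
    (∀ a ∈ A, ∀ b ∈ A,
        V (a * b) = Φ a ∘L V b ∧ V (a * φ b) = V a ∘L Φ b) ∧
    (∀ a ∈ A, ∀ b ∈ A, V a ∘L C b = Φ (a * b)) :=
  creation_annihilation_module_relations_general μ p A hAmul φ hφA hφ_mul Φ C V hΦ hCzero hCsucc hVf
end

section
/- Let p ∈ (1,∞), let A ⊆ L(L^p(μ)) with isometric automorphism φ_A, let φ_A^∞ and u_ℤ be the operators on L^p(ν×μ) defined above. Then for all a ∈ A: (1) for n ≥ 0, u_ℤ(n)φ_A^∞(a)u_ℤ(−n) = φ_A^∞(φ_A^n(a)); (2) for n ≥ 1, u_ℤ(−n)φ_A^∞(a)u_ℤ(n) = φ_A^∞(φ_A^{−n}(a)) − Σ_{k=0}^{n−1} θ_{δ_k,δ_k} ⊗ φ_A^{k−n}(a). -/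
open MeasureTheory
open scoped ENNReal

/-! Every operator involved acts coordinatewise on `ℓ^p(ℕ, L^p(μ))`, so each identity reduces to
a comparison of diagonal entries. Conjugating the diagonal operator with entries `d k` by the
shifts gives the entries `d (k + n)`, resp. `d (k - n)` for `k ≥ n` and `0` for `k < n`. For
`d k = φ^[k] a` these are `φ^[k] (φ^[n] a)`, resp. `φ^[k] (ψ^[n] a)` for `k ≥ n` because `φ^[n]`
inverts `ψ^[n]` on `A`; the entries `k < n` are exactly those of `Θn`. -/

theorem Set.LeftInvOn.iterate {α : Type*} {f g : α → α} {s : Set α} (h : Set.LeftInvOn g f s)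
    (hf : Set.MapsTo f s s) (n : ℕ) : Set.LeftInvOn g^[n] f^[n] s := by
  induction n with
  | zero => exact fun _ _ => rfl
  | succ n ih =>
    intro x hx
    rw [Function.iterate_succ_apply, Function.iterate_succ_apply', h (hf.iterate n hx), ih hx]

theorem Set.LeftInvOn.iterate_apply_iterate_of_le {α : Type*} {f g : α → α} {s : Set α}
    (h : Set.LeftInvOn g f s) (hf : Set.MapsTo f s s) {x : α} (hx : x ∈ s) {n k : ℕ}
    (hnk : n ≤ k) : g^[k] (f^[n] x) = g^[k - n] x := by
  rw [← Nat.sub_add_cancel hnk, Function.iterate_add_apply, h.iterate hf n hx, Nat.add_sub_cancel]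

section Diagonal

variable {𝕜 E : Type*} [NontriviallyNormedField 𝕜] [NormedAddCommGroup E] [NormedSpace 𝕜 E]
  {p : ℝ≥0∞} [Fact (1 ≤ p)]

def IsDiagonalWith (T : lp (fun _ : ℕ => E) p →L[𝕜] lp (fun _ : ℕ => E) p)
    (d : ℕ → E →L[𝕜] E) : Prop :=
  ∀ ξ k, T ξ k = d k (ξ k)

namespace IsDiagonalWith

variable {T T' S R : lp (fun _ : ℕ => E) p →L[𝕜] lp (fun _ : ℕ => E) p} {d d' : ℕ → E →L[𝕜] E}

theorem eq (hT : IsDiagonalWith T d) (hT' : IsDiagonalWith T' d) : T = T' := by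
  ext ξ k
  rw [hT, hT']

theorem sub (hT : IsDiagonalWith T d) (hT' : IsDiagonalWith T' d') :
    IsDiagonalWith (T - T') (d - d') := by
  intro ξ k
  rw [sub_apply, lp.coeFn_sub, Pi.sub_apply, hT ξ k, hT' ξ k, Pi.sub_apply,
    sub_apply]

theorem of_apply_eq_ite {n : ℕ} {c : ℕ → E →L[𝕜] E}
    (hT : ∀ ξ k, T ξ k = if k < n then c k (ξ k) else 0) :
    IsDiagonalWith T (fun k => if k < n then c k else 0) := by
  intro ξ k
  beta_reduce
  by_cases hk : k < n
  · rw [hT, if_pos hk, if_pos hk]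
  · rw [hT, if_neg hk, if_neg hk, zero_apply]

variable {n : ℕ} (hS : ∀ ξ k, S ξ k = ξ (k + n))
  (hR : ∀ ξ k, R ξ k = if n ≤ k then ξ (k - n) else 0)
include hS hR

theorem shift_comp_comp_unshift (hT : IsDiagonalWith T d) :
    IsDiagonalWith (S ∘L T ∘L R) (fun k => d (k + n)) := by
  intro ξ k
  rw [ContinuousLinearMap.comp_apply, ContinuousLinearMap.comp_apply, hS, hT, hR,
    if_pos (Nat.le_add_left n k), Nat.add_sub_cancel]

theorem unshift_comp_comp_shift (hT : IsDiagonalWith T d) :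
    IsDiagonalWith (R ∘L T ∘L S) (fun k => if n ≤ k then d (k - n) else 0) := by
  intro ξ k
  rw [ContinuousLinearMap.comp_apply, ContinuousLinearMap.comp_apply, hR]
  beta_reduce
  by_cases hk : n ≤ k
  · rw [if_pos hk, if_pos hk, hT, hS, Nat.sub_add_cancel hk]
  · rw [if_neg hk, if_neg hk, zero_apply]

end IsDiagonalWith

end Diagonal

theorem translation_conjugation_of_phi_infinity_general
    {Ω : Type*} [MeasurableSpace Ω] (μ : Measure Ω)
    (p : ℝ≥0∞) [Fact (1 ≤ p)]
    (A : Set (Lp ℂ p μ →L[ℂ] Lp ℂ p μ))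
    (φ ψ : (Lp ℂ p μ →L[ℂ] Lp ℂ p μ) → (Lp ℂ p μ →L[ℂ] Lp ℂ p μ))
    (hφA : ∀ a ∈ A, φ a ∈ A) (hψA : ∀ a ∈ A, ψ a ∈ A)
    (hφψ : ∀ a ∈ A, φ (ψ a) = a)
    (Φ : (Lp ℂ p μ →L[ℂ] Lp ℂ p μ) →
        (lp (fun _ : ℕ => Lp ℂ p μ) p →L[ℂ] lp (fun _ : ℕ => Lp ℂ p μ) p))
    (hΦ : ∀ a ∈ A, ∀ (ξ : lp (fun _ : ℕ => Lp ℂ p μ) p) (k : ℕ),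
      (Φ a ξ) k = (φ^[k] a) (ξ k))
    (U : ℤ → (lp (fun _ : ℕ => Lp ℂ p μ) p →L[ℂ] lp (fun _ : ℕ => Lp ℂ p μ) p))
    (hU_pos : ∀ (n : ℕ) (ξ : lp (fun _ : ℕ => Lp ℂ p μ) p) (k : ℕ),
      (U (n : ℤ) ξ) k = ξ (k + n))
    (hU_neg : ∀ (n : ℕ) (ξ : lp (fun _ : ℕ => Lp ℂ p μ) p) (k : ℕ),
      (U (-(n : ℤ)) ξ) k = if n ≤ k then ξ (k - n) else 0) :
    -- (1)
    (∀ a ∈ A, ∀ n : ℕ,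
      U (n : ℤ) ∘L Φ a ∘L U (-(n : ℤ)) = Φ (φ^[n] a)) ∧
    -- (2): `Θn` is `Σ_{k=0}^{n−1} θ_{δ_k,δ_k} ⊗ φ_A^{k−n}(a)`
    (∀ a ∈ A, ∀ n : ℕ, 1 ≤ n →
      ∀ Θn : lp (fun _ : ℕ => Lp ℂ p μ) p →L[ℂ] lp (fun _ : ℕ => Lp ℂ p μ) p,
        (∀ (ξ : lp (fun _ : ℕ => Lp ℂ p μ) p) (k : ℕ),
          (Θn ξ) k = if k < n then (φ^[k] (ψ^[n] a)) (ξ k) else 0) →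
        U (-(n : ℤ)) ∘L Φ a ∘L U (n : ℤ) = Φ (ψ^[n] a) - Θn) := by
  refine ⟨fun a ha n => ?_, fun a ha n _ Θn hΘ => ?_⟩
  · have hconj := IsDiagonalWith.shift_comp_comp_unshift (hU_pos n) (hU_neg n) (hΦ a ha)
    simp only [Function.iterate_add_apply] at hconj
    exact hconj.eq (hΦ _ (Set.MapsTo.iterate hφA n ha))
  · have hconj := IsDiagonalWith.unshift_comp_comp_shift (hU_pos n) (hU_neg n) (hΦ a ha)
    have hdiff := IsDiagonalWith.sub (hΦ _ (Set.MapsTo.iterate hψA n ha)) (.of_apply_eq_ite hΘ)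
    have hentries : (fun k => if n ≤ k then φ^[k - n] a else 0) =
        (fun k => φ^[k] (ψ^[n] a)) - fun k => if k < n then φ^[k] (ψ^[n] a) else 0 := by
      funext k
      by_cases hk : n ≤ k
      · simp [hk, not_lt.mpr hk, Set.LeftInvOn.iterate_apply_iterate_of_le hφψ hψA ha hk]
      · simp [hk, not_le.mp hk]
    rw [hentries] at hconj
    exact hconj.eq hdiff

/-- With `φ_A^∞` the diagonal operator
`(φ_A^∞(a)ξ)_k = φ_A^k(a)(ξ_k)` and `u_ℤ(n)` the translation operators on
`ℓ^p(ℤ_{≥0}) ⊗_p L^p(μ)` (realized as a `p`-direct sum), one has for `a ∈ A`: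
(1) for `n ≥ 0`, `u_ℤ(n) φ_A^∞(a) u_ℤ(−n) = φ_A^∞(φ_A^n(a))`;
(2) for `n ≥ 1`,
`u_ℤ(−n) φ_A^∞(a) u_ℤ(n) = φ_A^∞(φ_A^{−n}(a)) − Σ_{k=0}^{n−1} θ_{δ_k,δ_k} ⊗ φ_A^{k−n}(a)`. -/
theorem translation_conjugation_of_phi_infinity
    {Ω : Type*} [MeasurableSpace Ω] (μ : Measure Ω)
    (p : ℝ≥0∞) [Fact (1 ≤ p)] (hp : 1 < p) (hp' : p ≠ ∞)
    (A : Set (Lp ℂ p μ →L[ℂ] Lp ℂ p μ))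
    (φ ψ : (Lp ℂ p μ →L[ℂ] Lp ℂ p μ) → (Lp ℂ p μ →L[ℂ] Lp ℂ p μ))
    (hφA : ∀ a ∈ A, φ a ∈ A) (hψA : ∀ a ∈ A, ψ a ∈ A)
    (hφ_iso : ∀ a ∈ A, ‖φ a‖ = ‖a‖)
    (hφψ : ∀ a ∈ A, φ (ψ a) = a) (hψφ : ∀ a ∈ A, ψ (φ a) = a)
    (Φ : (Lp ℂ p μ →L[ℂ] Lp ℂ p μ) →
        (lp (fun _ : ℕ => Lp ℂ p μ) p →L[ℂ] lp (fun _ : ℕ => Lp ℂ p μ) p))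
    (hΦ : ∀ a ∈ A, ∀ (ξ : lp (fun _ : ℕ => Lp ℂ p μ) p) (k : ℕ),
      (Φ a ξ) k = (φ^[k] a) (ξ k))
    (U : ℤ → (lp (fun _ : ℕ => Lp ℂ p μ) p →L[ℂ] lp (fun _ : ℕ => Lp ℂ p μ) p))
    (hU_pos : ∀ (n : ℕ) (ξ : lp (fun _ : ℕ => Lp ℂ p μ) p) (k : ℕ),
      (U (n : ℤ) ξ) k = ξ (k + n))
    (hU_neg : ∀ (n : ℕ) (ξ : lp (fun _ : ℕ => Lp ℂ p μ) p) (k : ℕ),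
      (U (-(n : ℤ)) ξ) k = if n ≤ k then ξ (k - n) else 0) :
    -- (1)
    (∀ a ∈ A, ∀ n : ℕ,
      U (n : ℤ) ∘L Φ a ∘L U (-(n : ℤ)) = Φ (φ^[n] a)) ∧
    -- (2): `Θn` is `Σ_{k=0}^{n−1} θ_{δ_k,δ_k} ⊗ φ_A^{k−n}(a)`
    (∀ a ∈ A, ∀ n : ℕ, 1 ≤ n →
      ∀ Θn : lp (fun _ : ℕ => Lp ℂ p μ) p →L[ℂ] lp (fun _ : ℕ => Lp ℂ p μ) p,
        (∀ (ξ : lp (fun _ : ℕ => Lp ℂ p μ) p) (k : ℕ),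
          (Θn ξ) k = if k < n then (φ^[k] (ψ^[n] a)) (ξ k) else 0) →
        U (-(n : ℤ)) ∘L Φ a ∘L U (n : ℤ) = Φ (ψ^[n] a) - Θn) :=
  translation_conjugation_of_phi_infinity_general μ p A φ ψ hφA hψA hφψ Φ hΦ U hU_pos hU_neg
end

section
/- Let p ∈ (1,∞), let A ⊆ L(L^p(μ)) with isometric automorphism φ_A, and let c_A, v_A be the creation/annihilation operators on L^p(ν × μ). For n, m ≥ 1 and a₁,…,a_n, b₁,…,b_m ∈ A: ‖c_A(a₁)⋯c_A(a_n)‖ = ‖φ_A^{n−1}(a₁)⋯φ_A(a_{n−1})a_n‖ and ‖v_A(b₁)⋯v_A(b_m)‖ = ‖b₁φ_A(b₂)⋯φ_A^{m−1}(b_m)‖. -/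
open MeasureTheory
open scoped ENNReal

section Aux

variable {M : Type*} [Monoid M]

lemma aux_prod_mem (A : Set M) (hAmul : ∀ a ∈ A, ∀ b ∈ A, a * b ∈ A) :
    ∀ l : List M, l ≠ [] → (∀ x ∈ l, x ∈ A) → l.prod ∈ A := by
  intro l
  induction l with
  | nil => exact fun h _ => absurd rfl h
  | cons x l ih =>
    intro _ hmem
    rcases eq_or_ne l [] with rfl | hl
    · simpa using hmem x (by simp)
    · rw [List.prod_cons]
      exact hAmul x (hmem x (by simp)) l.prod
        (ih hl fun y hy => hmem y (List.mem_cons_of_mem _ hy))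

lemma aux_iter_mem {M : Type*} (A : Set M) (φ : M → M) (hφA : ∀ a ∈ A, φ a ∈ A) :
    ∀ (k : ℕ) (a : M), a ∈ A → φ^[k] a ∈ A := by
  intro k
  induction k with
  | zero => simpa using fun a ha => ha
  | succ k ih =>
    intro a ha
    rw [Function.iterate_succ_apply']
    exact hφA _ (ih a ha)

lemma aux_phi_prod (A : Set M) (hAmul : ∀ a ∈ A, ∀ b ∈ A, a * b ∈ A)
    (φ : M → M) (hφ_mul : ∀ a ∈ A, ∀ b ∈ A, φ (a * b) = φ a * φ b) :
    ∀ l : List M, l ≠ [] → (∀ x ∈ l, x ∈ A) → φ l.prod = (l.map φ).prod := by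
  intro l
  induction l with
  | nil => exact fun h _ => absurd rfl h
  | cons x l ih =>
    intro _ hmem
    rcases eq_or_ne l [] with rfl | hl
    · simp
    · have hx : x ∈ A := hmem x (by simp)
      have hmem' : ∀ y ∈ l, y ∈ A := fun y hy => hmem y (List.mem_cons_of_mem _ hy)
      have hlp : l.prod ∈ A := aux_prod_mem A hAmul l hl hmem'
      rw [List.prod_cons, hφ_mul x hx l.prod hlp, ih hl hmem', List.map_cons, List.prod_cons]

end Aux

set_option maxHeartbeats 1600000 in
/-- With the creation and annihilation operators on
`ℓ^p(ℤ_{≥0}) ⊗_p L^p(μ)` (realized as a `p`-direct sum) given componentwise by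
`(c_A(a)ξ)_0 = 0`, `(c_A(a)ξ)_{k+1} = φ_A^k(a)(ξ_k)` and
`(v_A(b)ξ)_k = φ_A^k(b)(ξ_{k+1})`, one has for `a₁,…,a_n, b₁,…,b_m ∈ A`:
`‖c_A(a₁)⋯c_A(a_n)‖ = ‖φ_A^{n−1}(a₁)⋯φ_A(a_{n−1})a_n‖` and
`‖v_A(b₁)⋯v_A(b_m)‖ = ‖b₁φ_A(b₂)⋯φ_A^{m−1}(b_m)‖`. -/
theorem norms_of_products_of_creation_annihilation
    {Ω : Type*} [MeasurableSpace Ω] (μ : Measure Ω)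
    (p : ℝ≥0∞) [Fact (1 ≤ p)] (hp : 1 < p) (hp' : p ≠ ∞)
    (A : Set (Lp ℂ p μ →L[ℂ] Lp ℂ p μ))
    (hAmul : ∀ a ∈ A, ∀ b ∈ A, a * b ∈ A)
    (φ : (Lp ℂ p μ →L[ℂ] Lp ℂ p μ) → (Lp ℂ p μ →L[ℂ] Lp ℂ p μ))
    (hφA : ∀ a ∈ A, φ a ∈ A)
    (hφ_iso : ∀ a ∈ A, ‖φ a‖ = ‖a‖)
    (hφ_mul : ∀ a ∈ A, ∀ b ∈ A, φ (a * b) = φ a * φ b)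
    (C V : (Lp ℂ p μ →L[ℂ] Lp ℂ p μ) →
        (lp (fun _ : ℕ => Lp ℂ p μ) p →L[ℂ] lp (fun _ : ℕ => Lp ℂ p μ) p))
    (hCzero : ∀ a ∈ A, ∀ ξ : lp (fun _ : ℕ => Lp ℂ p μ) p, (C a ξ) 0 = 0)
    (hCsucc : ∀ a ∈ A, ∀ (ξ : lp (fun _ : ℕ => Lp ℂ p μ) p) (k : ℕ),
      (C a ξ) (k + 1) = (φ^[k] a) (ξ k))
    (hVf : ∀ b ∈ A, ∀ (ξ : lp (fun _ : ℕ => Lp ℂ p μ) p) (k : ℕ),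
      (V b ξ) k = (φ^[k] b) (ξ (k + 1))) :
    (∀ n : ℕ, 1 ≤ n → ∀ a : Fin n → (Lp ℂ p μ →L[ℂ] Lp ℂ p μ), (∀ i, a i ∈ A) →
      ‖(List.ofFn fun i => C (a i)).prod‖ =
        ‖(List.ofFn fun i : Fin n => φ^[n - 1 - i.val] (a i)).prod‖) ∧
    (∀ m : ℕ, 1 ≤ m → ∀ b : Fin m → (Lp ℂ p μ →L[ℂ] Lp ℂ p μ), (∀ i, b i ∈ A) →
      ‖(List.ofFn fun i => V (b i)).prod‖ =
        ‖(List.ofFn fun i : Fin m => φ^[i.val] (b i)).prod‖) := by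
  have hp0 : p ≠ 0 := fun h => by rw [h] at hp; exact (not_lt_of_ge zero_le) hp
  have hr : 0 < p.toReal := ENNReal.toReal_pos hp0 hp'
  have hiter : ∀ (k : ℕ) (x : Lp ℂ p μ →L[ℂ] Lp ℂ p μ), x ∈ A → φ^[k] x ∈ A :=
    aux_iter_mem A φ hφA
  -- products of iterates stay in A
  have hprodmem : ∀ (n : ℕ), 1 ≤ n →
      ∀ (a : Fin n → (Lp ℂ p μ →L[ℂ] Lp ℂ p μ)), (∀ i, a i ∈ A) →
      ∀ (c : Fin n → ℕ), (List.ofFn fun i => φ^[c i] (a i)).prod ∈ A := by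
    intro n hn a ha c
    refine aux_prod_mem A hAmul _ ?_ ?_
    · intro hnil
      have := congrArg List.length hnil
      simp at this
      omega
    · intro x hx
      rw [List.mem_ofFn] at hx
      obtain ⟨i, rfl⟩ := hx
      exact hiter _ _ (ha i)
  -- φ of such a product shifts all exponents by one
  have hshift : ∀ (n : ℕ), 1 ≤ n →
      ∀ (a : Fin n → (Lp ℂ p μ →L[ℂ] Lp ℂ p μ)), (∀ i, a i ∈ A) →
      ∀ (c : Fin n → ℕ),
      φ (List.ofFn fun i => φ^[c i] (a i)).prod
        = (List.ofFn fun i => φ^[c i + 1] (a i)).prod := by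
    intro n hn a ha c
    rw [aux_phi_prod A hAmul φ hφ_mul _ ?_ ?_, List.map_ofFn]
    · exact congrArg List.prod (congrArg List.ofFn (funext fun i =>
        (Function.iterate_succ_apply' φ (c i) (a i)).symm))
    · intro hnil
      have := congrArg List.length hnil
      simp at this
      omega
    · intro x hx
      rw [List.mem_ofFn] at hx
      obtain ⟨i, rfl⟩ := hx
      exact hiter _ _ (ha i)
  -- norm is invariant under shifting all exponents
  have hnormshift : ∀ (n : ℕ), 1 ≤ n →
      ∀ (a : Fin n → (Lp ℂ p μ →L[ℂ] Lp ℂ p μ)), (∀ i, a i ∈ A) →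
      ∀ (k : ℕ) (c : Fin n → ℕ),
      ‖(List.ofFn fun i => φ^[k + c i] (a i)).prod‖
        = ‖(List.ofFn fun i => φ^[c i] (a i)).prod‖ := by
    intro n hn a ha k
    induction k with
    | zero => intro c; simp
    | succ k ih =>
      intro c
      have h1 : (fun i : Fin n => φ^[k + 1 + c i] (a i))
          = fun i : Fin n => φ^[(k + c i) + 1] (a i) := by
        funext i; congr 1; omega
      rw [h1, ← hshift n hn a ha (fun i => k + c i),
        hφ_iso _ (hprodmem n hn a ha _), ih]
  -- component formula for products of creation operators
  have hCform : ∀ (n : ℕ) (a : Fin n → (Lp ℂ p μ →L[ℂ] Lp ℂ p μ)), (∀ i, a i ∈ A) →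
      ∀ ξ : lp (fun _ : ℕ => Lp ℂ p μ) p,
      (∀ j, j < n → ((List.ofFn fun i => C (a i)).prod ξ) j = 0) ∧
      (∀ k, ((List.ofFn fun i => C (a i)).prod ξ) (k + n) =
        ((List.ofFn fun i : Fin n => φ^[k + (n - 1 - i.val)] (a i)).prod) (ξ k)) := by
    intro n
    induction n with
    | zero =>
      intro a ha ξ
      exact ⟨fun j hj => absurd hj (by omega), fun k => by simp⟩
    | succ n ih =>
      intro a ha ξ
      have hQ := ih (fun i => a i.succ) (fun i => ha i.succ) ξ
      have hsplit : (List.ofFn fun i => C (a i)).prod =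
          C (a 0) * (List.ofFn fun i : Fin n => C (a i.succ)).prod := by
        rw [List.ofFn_succ, List.prod_cons]
      constructor
      · intro j hj
        rw [hsplit, ContinuousLinearMap.mul_apply]
        match j, hj with
        | 0, _ => exact hCzero (a 0) (ha 0) _
        | (j + 1), hj =>
          rw [hCsucc (a 0) (ha 0) _ j, hQ.1 j (by omega), map_zero]
      · intro k
        have hR : (List.ofFn fun i : Fin (n + 1) => φ^[k + (n + 1 - 1 - i.val)] (a i)).prod =
            φ^[k + n] (a 0)
              * (List.ofFn fun i : Fin n => φ^[k + (n - 1 - i.val)] (a i.succ)).prod := by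
          rw [List.ofFn_succ, List.prod_cons]
          congr 1
          refine congrArg List.prod (congrArg List.ofFn (funext fun i => ?_))
          have he : k + (n + 1 - 1 - (Fin.succ i).val) = k + (n - 1 - i.val) := by
            simp only [Fin.val_succ]; omega
          rw [he]
        have hidx : k + (n + 1) = (k + n) + 1 := by omega
        rw [hsplit, ContinuousLinearMap.mul_apply, hidx,
          hCsucc (a 0) (ha 0) _ (k + n), hQ.2 k, hR, ContinuousLinearMap.mul_apply]
  -- component formula for products of annihilation operators
  have hVform : ∀ (m : ℕ) (b : Fin m → (Lp ℂ p μ →L[ℂ] Lp ℂ p μ)), (∀ i, b i ∈ A) →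
      ∀ (ξ : lp (fun _ : ℕ => Lp ℂ p μ) p) (k : ℕ),
      ((List.ofFn fun i => V (b i)).prod ξ) k =
        ((List.ofFn fun i : Fin m => φ^[k + i.val] (b i)).prod) (ξ (k + m)) := by
    intro m
    induction m with
    | zero => intro b hb ξ k; simp
    | succ m ih =>
      intro b hb ξ k
      have hR : (List.ofFn fun i : Fin (m + 1) => φ^[k + i.val] (b i)).prod =
          φ^[k] (b 0)
            * (List.ofFn fun i : Fin m => φ^[(k + 1) + i.val] (b i.succ)).prod := by
        rw [List.ofFn_succ, List.prod_cons]
        congr 1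
        refine congrArg List.prod (congrArg List.ofFn (funext fun i => ?_))
        have he : k + (Fin.succ i).val = (k + 1) + i.val := by
          simp only [Fin.val_succ]; omega
        rw [he]
      have hidx : (k + 1) + m = k + (m + 1) := by omega
      rw [List.ofFn_succ, List.prod_cons, ContinuousLinearMap.mul_apply,
        hVf (b 0) (hb 0) _ k, ih (fun i => b i.succ) (fun i => hb i.succ) ξ (k + 1),
        hR, ContinuousLinearMap.mul_apply, hidx]
  constructor
  · -- creation operators
    intro n hn a ha
    have hGk : ∀ k : ℕ,
        ‖(List.ofFn fun i : Fin n => φ^[k + (n - 1 - i.val)] (a i)).prod‖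
          = ‖(List.ofFn fun i : Fin n => φ^[n - 1 - i.val] (a i)).prod‖ :=
      fun k => hnormshift n hn a ha k (fun i => n - 1 - i.val)
    refine le_antisymm ?_ ?_
    · refine ContinuousLinearMap.opNorm_le_bound _ (norm_nonneg _) fun ξ => ?_
      have h1 := lp.hasSum_norm hr ((List.ofFn fun i => C (a i)).prod ξ)
      have hinj : Function.Injective (fun k : ℕ => k + n) := fun x y hxy => by
        simp only [Nat.add_right_cancel_iff] at hxy; exact hxy
      have hsupp : ∀ j ∉ Set.range (fun k : ℕ => k + n),
          ‖((List.ofFn fun i => C (a i)).prod ξ) j‖ ^ p.toReal = 0 := by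
        intro j hj
        have hjn : j < n := by
          by_contra hcon
          exact hj ⟨j - n, by show j - n + n = j; omega⟩
        rw [(hCform n a ha ξ).1 j hjn, norm_zero, Real.zero_rpow hr.ne']
      have h2 : HasSum (fun k => ‖((List.ofFn fun i => C (a i)).prod ξ) (k + n)‖ ^ p.toReal)
          (‖(List.ofFn fun i => C (a i)).prod ξ‖ ^ p.toReal) := by
        simpa [Function.comp_def] using (hinj.hasSum_iff hsupp).mpr h1
      have h3 : HasSum
          (fun k => ‖(List.ofFn fun i : Fin n => φ^[n - 1 - i.val] (a i)).prod‖ ^ p.toReal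
            * ‖ξ k‖ ^ p.toReal)
          (‖(List.ofFn fun i : Fin n => φ^[n - 1 - i.val] (a i)).prod‖ ^ p.toReal
            * ‖ξ‖ ^ p.toReal) := (lp.hasSum_norm hr ξ).mul_left _
      have h4 := hasSum_le (g := fun k =>
          ‖(List.ofFn fun i : Fin n => φ^[n - 1 - i.val] (a i)).prod‖ ^ p.toReal
            * ‖ξ k‖ ^ p.toReal) (fun k => ?_) h2 h3
      · rw [← Real.mul_rpow (norm_nonneg _) (norm_nonneg _)] at h4
        exact (Real.rpow_le_rpow_iff (norm_nonneg _)
          (mul_nonneg (norm_nonneg _) (norm_nonneg _)) hr).mp h4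
      · beta_reduce
        rw [(hCform n a ha ξ).2 k, ← Real.mul_rpow (norm_nonneg _) (norm_nonneg _)]
        refine Real.rpow_le_rpow (norm_nonneg _) ?_ hr.le
        calc ‖((List.ofFn fun i : Fin n => φ^[k + (n - 1 - i.val)] (a i)).prod) (ξ k)‖
            ≤ ‖(List.ofFn fun i : Fin n => φ^[k + (n - 1 - i.val)] (a i)).prod‖ * ‖ξ k‖ :=
              ContinuousLinearMap.le_opNorm _ _
          _ = ‖(List.ofFn fun i : Fin n => φ^[n - 1 - i.val] (a i)).prod‖ * ‖ξ k‖ := by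
              rw [hGk k]
    · refine ContinuousLinearMap.opNorm_le_bound _ (norm_nonneg _) fun v => ?_
      have h5 : ((List.ofFn fun i => C (a i)).prod (lp.single p 0 v)) (0 + n) =
          ((List.ofFn fun i : Fin n => φ^[n - 1 - i.val] (a i)).prod) v := by
        rw [(hCform n a ha (lp.single p 0 v)).2 0]
        have h0 : (fun i : Fin n => φ^[0 + (n - 1 - i.val)] (a i))
            = fun i : Fin n => φ^[n - 1 - i.val] (a i) := by
          funext i; rw [zero_add]
        rw [h0, lp.single_apply_self]
      calc ‖((List.ofFn fun i : Fin n => φ^[n - 1 - i.val] (a i)).prod) v‖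
          = ‖((List.ofFn fun i => C (a i)).prod (lp.single p 0 v)) (0 + n)‖ := by rw [h5]
        _ ≤ ‖(List.ofFn fun i => C (a i)).prod (lp.single p 0 v)‖ :=
            lp.norm_apply_le_norm hp0 _ _
        _ ≤ ‖(List.ofFn fun i => C (a i)).prod‖ * ‖(lp.single p 0 v : lp (fun _ : ℕ => Lp ℂ p μ) p)‖ :=
            ContinuousLinearMap.le_opNorm _ _
        _ = ‖(List.ofFn fun i => C (a i)).prod‖ * ‖v‖ := by
            rw [show ‖(lp.single p (0 : ℕ) v : lp (fun _ : ℕ => Lp ℂ p μ) p)‖ = ‖v‖ from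
              lp.norm_single (E := fun _ : ℕ => Lp ℂ p μ) (lt_trans zero_lt_one hp) 0 v]
  · -- annihilation operators
    intro m hm b hb
    have hHk : ∀ k : ℕ,
        ‖(List.ofFn fun i : Fin m => φ^[k + i.val] (b i)).prod‖
          = ‖(List.ofFn fun i : Fin m => φ^[i.val] (b i)).prod‖ := by
      intro k
      have := hnormshift m hm b hb k (fun i => i.val)
      exact this
    refine le_antisymm ?_ ?_
    · refine ContinuousLinearMap.opNorm_le_bound _ (norm_nonneg _) fun ξ => ?_
      have h1 := lp.hasSum_norm hr ((List.ofFn fun i => V (b i)).prod ξ)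
      have h3 : HasSum
          (fun j => ‖(List.ofFn fun i : Fin m => φ^[i.val] (b i)).prod‖ ^ p.toReal
            * ‖ξ j‖ ^ p.toReal)
          (‖(List.ofFn fun i : Fin m => φ^[i.val] (b i)).prod‖ ^ p.toReal
            * ‖ξ‖ ^ p.toReal) := (lp.hasSum_norm hr ξ).mul_left _
      have hinj : Function.Injective (fun k : ℕ => k + m) := fun x y hxy => by
        simp only [Nat.add_right_cancel_iff] at hxy; exact hxy
      have h4 := hasSum_le_inj (f := fun k =>
            ‖((List.ofFn fun i => V (b i)).prod ξ) k‖ ^ p.toReal)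
          (fun k : ℕ => k + m) hinj (fun c _ => by positivity) (fun k => ?_) h1 h3
      · rw [← Real.mul_rpow (norm_nonneg _) (norm_nonneg _)] at h4
        exact (Real.rpow_le_rpow_iff (norm_nonneg _)
          (mul_nonneg (norm_nonneg _) (norm_nonneg _)) hr).mp h4
      · beta_reduce
        rw [hVform m b hb ξ k, ← Real.mul_rpow (norm_nonneg _) (norm_nonneg _)]
        refine Real.rpow_le_rpow (norm_nonneg _) ?_ hr.le
        calc ‖((List.ofFn fun i : Fin m => φ^[k + i.val] (b i)).prod) (ξ (k + m))‖
            ≤ ‖(List.ofFn fun i : Fin m => φ^[k + i.val] (b i)).prod‖ * ‖ξ (k + m)‖ :=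
              ContinuousLinearMap.le_opNorm _ _
          _ = ‖(List.ofFn fun i : Fin m => φ^[i.val] (b i)).prod‖ * ‖ξ (k + m)‖ := by
              rw [hHk k]
    · refine ContinuousLinearMap.opNorm_le_bound _ (norm_nonneg _) fun v => ?_
      have h5 : ((List.ofFn fun i => V (b i)).prod (lp.single p m v)) 0 =
          ((List.ofFn fun i : Fin m => φ^[i.val] (b i)).prod) v := by
        rw [hVform m b hb (lp.single p m v) 0]
        have h0 : (fun i : Fin m => φ^[0 + i.val] (b i))
            = fun i : Fin m => φ^[i.val] (b i) := by
          funext i; rw [zero_add]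
        rw [h0, zero_add, lp.single_apply_self]
      calc ‖((List.ofFn fun i : Fin m => φ^[i.val] (b i)).prod) v‖
          = ‖((List.ofFn fun i => V (b i)).prod (lp.single p m v)) 0‖ := by rw [h5]
        _ ≤ ‖(List.ofFn fun i => V (b i)).prod (lp.single p m v)‖ :=
            lp.norm_apply_le_norm hp0 _ _
        _ ≤ ‖(List.ofFn fun i => V (b i)).prod‖ * ‖(lp.single p m v : lp (fun _ : ℕ => Lp ℂ p μ) p)‖ :=
            ContinuousLinearMap.le_opNorm _ _
        _ = ‖(List.ofFn fun i => V (b i)).prod‖ * ‖v‖ := by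
            rw [show ‖(lp.single p m v : lp (fun _ : ℕ => Lp ℂ p μ) p)‖ = ‖v‖ from
              lp.norm_single (E := fun _ : ℕ => Lp ℂ p μ) (lt_trans zero_lt_one hp) m v]
end

section
/- Let p ∈ (1,∞), let A ⊆ L(L^p(μ)) have a bicontractive approximate identity (e_λ) (i.e., ‖e_λ‖ ≤ 1 and ‖id − e_λ‖ ≤ 1), and let p_n ∈ L(ℓ^p(ℤ_{≥0})) be the projection onto span{δ₀,…,δ_n}. Then the net (p_n ⊗ e_λ), indexed by ℤ_{≥0} × Λ, is a bicontractive approximate identity for the algebra K(ℓ^p(ℤ_{≥0})) ⊗_p A of operators on ℓ^p(ℤ_{≥0}) ⊗_p L^p(μ): ‖p_n ⊗ e_λ‖ ≤ 1, ‖id − p_n ⊗ e_λ‖ ≤ 1, and (p_n ⊗ e_λ)t → t and t(p_n ⊗ e_λ) → t in norm for every t in the closed span of operators θ_{κ,τ} with κ ∈ ℓ^p(ℤ_{≥0}) ⊗_p A and τ ∈ ℓ^q(ℤ_{≥0}) ⊗_p A. -/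
open MeasureTheory Filter Topology
open scoped ENNReal NNReal

noncomputable section Stmt19Aux
namespace Stmt19Aux

variable {E : ℕ → Type*} [∀ i, NormedAddCommGroup (E i)] {r : ℝ≥0∞}

lemma add_rpow_le_rpow_add_real {a b pr : ℝ} (ha : 0 ≤ a) (hb : 0 ≤ b) (h : 1 ≤ pr) :
    a ^ pr + b ^ pr ≤ (a + b) ^ pr := by
  lift a to ℝ≥0 using ha
  lift b to ℝ≥0 using hb
  exact_mod_cast NNReal.add_rpow_le_rpow_add a b h

lemma norm_le_of_le_coords (hr : 0 < r.toReal) (f g : lp E r)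
    (h : ∀ k, ‖f k‖ ≤ ‖g k‖) : ‖f‖ ≤ ‖g‖ := by
  refine lp.norm_le_of_tsum_le hr (lp.norm_nonneg' g) ?_
  rw [lp.norm_rpow_eq_tsum hr g]
  exact Summable.tsum_le_tsum (fun k => Real.rpow_le_rpow (norm_nonneg _) (h k) hr.le)
    ((lp.memℓp f).summable hr) ((lp.memℓp g).summable hr)

/-- truncation of `f` to coordinates `≤ n`. -/
def lpTrunc (n : ℕ) (f : lp E r) : lp E r :=
  ∑ i ∈ Finset.range (n + 1), lp.single r i (f i)

/-- tail of `f` beyond coordinate `n`. -/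
def lpTail (n : ℕ) (f : lp E r) : lp E r := f - lpTrunc n f

lemma lpTail_apply (n : ℕ) (f : lp E r) (j : ℕ) :
    lpTail n f j = if j ≤ n then 0 else f j := by
  have h1 : lpTrunc n f j = if j ∈ Finset.range (n + 1) then f j else 0 := by
    simp only [lpTrunc, lp.coeFn_sum, Finset.sum_apply, lp.single_apply, Finset.sum_pi_single]
  have h2 : lpTail n f j = f j - lpTrunc n f j := by
    simp [lpTail, lp.coeFn_sub]
  rw [h2, h1]
  simp only [Finset.mem_range, Nat.lt_succ_iff]
  by_cases hj : j ≤ n <;> simp [hj]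

lemma lpTail_tendsto [Fact (1 ≤ r)] (hr : r ≠ ∞) (f : lp E r) :
    Tendsto (fun n => ‖lpTail n f‖) atTop (𝓝 0) := by
  have h := (lp.hasSum_single hr f).tendsto_sum_nat
  have h2 : Tendsto (fun n : ℕ => lpTail n f) atTop (𝓝 (f - f)) :=
    tendsto_const_nhds.sub (h.comp (tendsto_add_atTop_nat 1))
  rw [sub_self] at h2
  simpa using h2.norm

lemma norm_le_mul_of_coords (hr : 0 < r.toReal) (f : lp E r)
    (x : lp (fun _ : ℕ => ℂ) r) {C : ℝ} (hC : 0 ≤ C)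
    (h : ∀ k, ‖f k‖ ≤ ‖x k‖ * C) : ‖f‖ ≤ ‖x‖ * C := by
  refine lp.norm_le_of_tsum_le hr (mul_nonneg (lp.norm_nonneg' x) hC) ?_
  have h1 : ∀ k, ‖f k‖ ^ r.toReal ≤ ‖x k‖ ^ r.toReal * C ^ r.toReal := fun k => by
    rw [← Real.mul_rpow (norm_nonneg _) hC]
    exact Real.rpow_le_rpow (norm_nonneg _) (h k) hr.le
  calc ∑' k, ‖f k‖ ^ r.toReal
      ≤ ∑' k, ‖x k‖ ^ r.toReal * C ^ r.toReal :=
        Summable.tsum_le_tsum h1 ((lp.memℓp f).summable hr)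
          (((lp.memℓp x).summable hr).mul_right _)
    _ = (∑' k, ‖x k‖ ^ r.toReal) * C ^ r.toReal := tsum_mul_right
    _ = (‖x‖ * C) ^ r.toReal := by
        rw [← lp.norm_rpow_eq_tsum hr, Real.mul_rpow (lp.norm_nonneg' x) hC]

lemma norm_le_two_term (hr1 : 1 ≤ r.toReal) (f : lp E r)
    (x : lp (fun _ : ℕ => ℂ) r) (n : ℕ) {C₁ C₂ : ℝ} (hC₁ : 0 ≤ C₁) (hC₂ : 0 ≤ C₂)
    (h1 : ∀ k, k ≤ n → ‖f k‖ ≤ ‖x k‖ * C₁)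
    (h2 : ∀ k, n < k → ‖f k‖ ≤ ‖x k‖ * C₂) :
    ‖f‖ ≤ ‖x‖ * C₁ + ‖lpTail n x‖ * C₂ := by
  have hr : 0 < r.toReal := zero_lt_one.trans_le hr1
  refine lp.norm_le_of_tsum_le hr
    (add_nonneg (mul_nonneg (lp.norm_nonneg' x) hC₁)
      (mul_nonneg (lp.norm_nonneg' _) hC₂)) ?_
  set R := r.toReal with hR
  have key : ∀ k, ‖f k‖ ^ R ≤
      ‖x k‖ ^ R * C₁ ^ R + ‖(lpTail n x) k‖ ^ R * C₂ ^ R := by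
    intro k
    by_cases hk : k ≤ n
    · have hle := Real.rpow_le_rpow (norm_nonneg _) (h1 k hk) hr.le
      rw [Real.mul_rpow (norm_nonneg _) hC₁] at hle
      have h0 : 0 ≤ ‖(lpTail n x) k‖ ^ R * C₂ ^ R := by positivity
      linarith
    · push_neg at hk
      have hle := Real.rpow_le_rpow (norm_nonneg _) (h2 k hk) hr.le
      rw [Real.mul_rpow (norm_nonneg _) hC₂] at hle
      rw [lpTail_apply, if_neg (not_le.mpr hk)]
      have h0 : 0 ≤ ‖x k‖ ^ R * C₁ ^ R := by positivity
      linarith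
  have hs1 : Summable fun k => ‖x k‖ ^ R * C₁ ^ R :=
    ((lp.memℓp x).summable hr).mul_right _
  have hs2 : Summable fun k => ‖(lpTail n x) k‖ ^ R * C₂ ^ R :=
    ((lp.memℓp (lpTail n x)).summable hr).mul_right _
  calc ∑' k, ‖f k‖ ^ R
      ≤ ∑' k, (‖x k‖ ^ R * C₁ ^ R + ‖(lpTail n x) k‖ ^ R * C₂ ^ R) :=
        Summable.tsum_le_tsum key ((lp.memℓp f).summable hr) (hs1.add hs2)
    _ = (∑' k, ‖x k‖ ^ R) * C₁ ^ R + (∑' k, ‖(lpTail n x) k‖ ^ R) * C₂ ^ R := by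
        rw [Summable.tsum_add hs1 hs2, tsum_mul_right, tsum_mul_right]
    _ = (‖x‖ * C₁) ^ R + (‖lpTail n x‖ * C₂) ^ R := by
        rw [← lp.norm_rpow_eq_tsum hr, ← lp.norm_rpow_eq_tsum hr,
          Real.mul_rpow (lp.norm_nonneg' x) hC₁,
          Real.mul_rpow (lp.norm_nonneg' _) hC₂]
    _ ≤ (‖x‖ * C₁ + ‖lpTail n x‖ * C₂) ^ R :=
        add_rpow_le_rpow_add_real (mul_nonneg (lp.norm_nonneg' x) hC₁)
          (mul_nonneg (lp.norm_nonneg' _) hC₂) hr1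

lemma holder {r s : ℝ≥0∞} (hrs : r.toReal.HolderConjugate s.toReal)
    {E F : ℕ → Type*} [∀ i, NormedAddCommGroup (E i)] [∀ i, NormedAddCommGroup (F i)]
    (f : lp E r) (g : lp F s) :
    Summable (fun j => ‖f j‖ * ‖g j‖) ∧ ∑' j, ‖f j‖ * ‖g j‖ ≤ ‖f‖ * ‖g‖ := by
  obtain ⟨C, -, hC', hC⟩ :=
    Real.inner_le_Lp_mul_Lq_hasSum_of_nonneg hrs (lp.norm_nonneg' f) (lp.norm_nonneg' g)
      (fun j => norm_nonneg _) (fun j => norm_nonneg _)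
      (lp.hasSum_norm hrs.pos f) (lp.hasSum_norm hrs.symm.pos g)
  exact ⟨hC.summable, by rw [hC.tsum_eq]; exact hC'⟩

end Stmt19Aux

end Stmt19Aux

set_option maxHeartbeats 2000000
set_option synthInstance.maxHeartbeats 200000
/-- Let `A ⊆ L(L^p(μ))` have a bicontractive approximate identity
`(e_λ)` and let `p_n` be the coordinate truncations on `ℓ^p(ℤ_{≥0})`.  Then the net
`(p_n ⊗ e_λ)`, indexed by `ℤ_{≥0} × Λ`, is a bicontractive approximate identity for
`K(ℓ^p(ℤ_{≥0})) ⊗_p A`: each `p_n ⊗ e_λ` and `id − p_n ⊗ e_λ` is contractive, and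
`(p_n ⊗ e_λ)t → t`, `t(p_n ⊗ e_λ) → t` in norm for every `t` in the closed span of
the operators `θ_{κ,τ}` with `κ ∈ ℓ^p ⊗ A`, `τ ∈ ℓ^q ⊗ A` (it suffices to span over
elementary tensors `θ_{x⊗a, y⊗b} : ξ ↦ (x(k) · a(Σ_j y(j) · b(ξ_j)))_k`). -/
theorem bicontractive_ai_for_compacts_tensor
    {Ω : Type*} [MeasurableSpace Ω] (μ : Measure Ω)
    (p q : ℝ≥0∞) [Fact (1 ≤ p)] (hp : 1 < p) (hp' : p ≠ ∞)
    (hpq : 1 / p + 1 / q = 1)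
    (A : Set (Lp ℂ p μ →L[ℂ] Lp ℂ p μ))
    {Λ : Type*} [Nonempty Λ] [SemilatticeSup Λ]
    (e : Λ → (Lp ℂ p μ →L[ℂ] Lp ℂ p μ))
    (heA : ∀ l, e l ∈ A)
    (he_contr : ∀ l, ‖e l‖ ≤ 1)
    (he_bicontr : ∀ l, ‖1 - e l‖ ≤ 1)
    (he_left : ∀ a ∈ A, Tendsto (fun l => e l * a) atTop (𝓝 a))
    (he_right : ∀ a ∈ A, Tendsto (fun l => a * e l) atTop (𝓝 a))
    -- the operators `p_n ⊗ e_λ` on the `p`-direct sum `ℓ^p(ℤ_{≥0}) ⊗_p L^p(μ)`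
    (Q : ℕ × Λ → (lp (fun _ : ℕ => Lp ℂ p μ) p →L[ℂ] lp (fun _ : ℕ => Lp ℂ p μ) p))
    (hQ : ∀ (n : ℕ) (l : Λ) (ξ : lp (fun _ : ℕ => Lp ℂ p μ) p) (k : ℕ),
      (Q (n, l) ξ) k = if k ≤ n then e l (ξ k) else 0) :
    (∀ nl : ℕ × Λ, ‖Q nl‖ ≤ 1) ∧
    (∀ nl : ℕ × Λ, ‖(1 : lp (fun _ : ℕ => Lp ℂ p μ) p →L[ℂ]
        lp (fun _ : ℕ => Lp ℂ p μ) p) - Q nl‖ ≤ 1) ∧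
    (∀ t ∈ closure (↑(Submodule.span ℂ
        { T : lp (fun _ : ℕ => Lp ℂ p μ) p →L[ℂ] lp (fun _ : ℕ => Lp ℂ p μ) p |
          ∃ (x : lp (fun _ : ℕ => ℂ) p) (y : lp (fun _ : ℕ => ℂ) q)
            (a b : Lp ℂ p μ →L[ℂ] Lp ℂ p μ), a ∈ A ∧ b ∈ A ∧
            ∀ (ξ : lp (fun _ : ℕ => Lp ℂ p μ) p) (k : ℕ),
              (T ξ) k = x k • a (∑' j : ℕ, y j • b (ξ j)) }) :
        Set (lp (fun _ : ℕ => Lp ℂ p μ) p →L[ℂ] lp (fun _ : ℕ => Lp ℂ p μ) p)),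
      Tendsto (fun nl => Q nl * t) atTop (𝓝 t) ∧
      Tendsto (fun nl => t * Q nl) atTop (𝓝 t)) := by
  classical
  -- exponent arithmetic
  have hp0 : p ≠ 0 := (zero_lt_one.trans hp).ne'
  have hpr1 : 1 < p.toReal := by
    have h := (ENNReal.toReal_lt_toReal (by simp) hp').mpr hp
    simpa using h
  have hpr : 0 < p.toReal := zero_lt_one.trans hpr1
  have hq' : q ≠ ∞ := by
    rintro rfl
    simp only [one_div, ENNReal.inv_top, add_zero, ENNReal.inv_eq_one] at hpq
    exact hp.ne' hpq
  haveI hconjE : ENNReal.HolderConjugate p q :=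
    ENNReal.holderConjugate_iff.mpr (by rw [one_div, one_div] at hpq; exact hpq)
  have hq1 : 1 ≤ q := ENNReal.HolderConjugate.one_le q p
  haveI hqfact : Fact (1 ≤ q) := ⟨hq1⟩
  have hq0 : q ≠ 0 := ENNReal.HolderConjugate.ne_zero q p
  have hqr : 0 < q.toReal := ENNReal.toReal_pos hq0 hq'
  have hconjR : p.toReal.HolderConjugate q.toReal := by
    refine Real.holderConjugate_iff.mpr ⟨hpr1, ?_⟩
    rw [one_div, one_div] at hpq
    have h2 := congrArg ENNReal.toReal hpq
    rw [ENNReal.toReal_add (ENNReal.inv_ne_top.mpr hp0) (ENNReal.inv_ne_top.mpr hq0),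
      ENNReal.toReal_inv, ENNReal.toReal_inv] at h2
    simpa using h2
  -- Part 1 : contractivity
  have hQnorm : ∀ nl : ℕ × Λ, ‖Q nl‖ ≤ 1 := by
    rintro ⟨n, l⟩
    refine ContinuousLinearMap.opNorm_le_bound _ zero_le_one (fun ξ => ?_)
    rw [one_mul]
    refine Stmt19Aux.norm_le_of_le_coords hpr (Q (n, l) ξ) ξ (fun k => ?_)
    rw [hQ n l ξ k]
    split_ifs with hk
    · calc ‖e l (ξ k)‖ ≤ ‖e l‖ * ‖ξ k‖ := (e l).le_opNorm _
        _ ≤ 1 * ‖ξ k‖ := mul_le_mul_of_nonneg_right (he_contr l) (norm_nonneg _)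
        _ = ‖ξ k‖ := one_mul _
    · simp
  -- Part 2 : bicontractivity
  have hQ1norm : ∀ nl : ℕ × Λ, ‖(1 : lp (fun _ : ℕ => Lp ℂ p μ) p →L[ℂ]
      lp (fun _ : ℕ => Lp ℂ p μ) p) - Q nl‖ ≤ 1 := by
    rintro ⟨n, l⟩
    refine ContinuousLinearMap.opNorm_le_bound _ zero_le_one (fun ξ => ?_)
    rw [one_mul]
    refine Stmt19Aux.norm_le_of_le_coords hpr _ ξ (fun k => ?_)
    have happ : ((1 : lp (fun _ : ℕ => Lp ℂ p μ) p →L[ℂ]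
        lp (fun _ : ℕ => Lp ℂ p μ) p) - Q (n, l)) ξ = ξ - Q (n, l) ξ := by
      simp [ContinuousLinearMap.sub_apply]
    rw [happ, lp.coeFn_sub, Pi.sub_apply, hQ n l ξ k]
    split_ifs with hk
    · have h1 : ξ k - e l (ξ k) = (1 - e l) (ξ k) := by
        simp [ContinuousLinearMap.sub_apply]
      rw [h1]
      calc ‖(1 - e l) (ξ k)‖ ≤ ‖1 - e l‖ * ‖ξ k‖ := (1 - e l).le_opNorm _
        _ ≤ 1 * ‖ξ k‖ := mul_le_mul_of_nonneg_right (he_bicontr l) (norm_nonneg _)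
        _ = ‖ξ k‖ := one_mul _
    · simp
  refine ⟨hQnorm, hQ1norm, ?_⟩
  -- Part 3
  have hfst : Tendsto (Prod.fst : ℕ × Λ → ℕ) atTop atTop := by
    rw [← Filter.prod_atTop_atTop_eq]; exact tendsto_fst
  have hsnd : Tendsto (Prod.snd : ℕ × Λ → Λ) atTop atTop := by
    rw [← Filter.prod_atTop_atTop_eq]; exact tendsto_snd
  -- convergence on the generators
  have hgen : ∀ T : lp (fun _ : ℕ => Lp ℂ p μ) p →L[ℂ] lp (fun _ : ℕ => Lp ℂ p μ) p,
      (∃ (x : lp (fun _ : ℕ => ℂ) p) (y : lp (fun _ : ℕ => ℂ) q)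
          (a b : Lp ℂ p μ →L[ℂ] Lp ℂ p μ), a ∈ A ∧ b ∈ A ∧
          ∀ (ξ : lp (fun _ : ℕ => Lp ℂ p μ) p) (k : ℕ),
            (T ξ) k = x k • a (∑' j : ℕ, y j • b (ξ j))) →
      Tendsto (fun nl => Q nl * T) atTop (𝓝 T) ∧
      Tendsto (fun nl => T * Q nl) atTop (𝓝 T) := by
    rintro T ⟨x, y, a, b, haA, hbA, hT⟩
    -- Hölder bound for the pairing of `y` against an `lp` vector
    have Hyξ : ∀ ξ : lp (fun _ : ℕ => Lp ℂ p μ) p,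
        Summable (fun j => ‖y j‖ * ‖ξ j‖) ∧ ∑' j, ‖y j‖ * ‖ξ j‖ ≤ ‖y‖ * ‖ξ‖ :=
      fun ξ => Stmt19Aux.holder hconjR.symm y ξ
    have hb_ptwise : ∀ (ξ : lp (fun _ : ℕ => Lp ℂ p μ) p) (j : ℕ),
        ‖y j • b (ξ j)‖ ≤ ‖b‖ * (‖y j‖ * ‖ξ j‖) := by
      intro ξ j
      rw [norm_smul]
      calc ‖y j‖ * ‖b (ξ j)‖ ≤ ‖y j‖ * (‖b‖ * ‖ξ j‖) :=
            mul_le_mul_of_nonneg_left (b.le_opNorm _) (norm_nonneg _)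
        _ = ‖b‖ * (‖y j‖ * ‖ξ j‖) := by ring
    have hnsummable : ∀ ξ : lp (fun _ : ℕ => Lp ℂ p μ) p,
        Summable (fun j => ‖y j • b (ξ j)‖) := fun ξ =>
      ((Hyξ ξ).1.mul_left ‖b‖).of_nonneg_of_le (fun j => norm_nonneg _) (hb_ptwise ξ)
    have hsummable : ∀ ξ : lp (fun _ : ℕ => Lp ℂ p μ) p,
        Summable (fun j => y j • b (ξ j)) := fun ξ => Summable.of_norm (hnsummable ξ)
    have hsnorm : ∀ ξ : lp (fun _ : ℕ => Lp ℂ p μ) p,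
        ‖∑' j, y j • b (ξ j)‖ ≤ ‖y‖ * ‖b‖ * ‖ξ‖ := by
      intro ξ
      calc ‖∑' j, y j • b (ξ j)‖ ≤ ∑' j, ‖y j • b (ξ j)‖ := norm_tsum_le_tsum_norm (hnsummable ξ)
        _ ≤ ∑' j, ‖b‖ * (‖y j‖ * ‖ξ j‖) :=
            Summable.tsum_le_tsum (hb_ptwise ξ) (hnsummable ξ) ((Hyξ ξ).1.mul_left _)
        _ = ‖b‖ * ∑' j, ‖y j‖ * ‖ξ j‖ := tsum_mul_left
        _ ≤ ‖b‖ * (‖y‖ * ‖ξ‖) := mul_le_mul_of_nonneg_left (Hyξ ξ).2 (norm_nonneg _)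
        _ = ‖y‖ * ‖b‖ * ‖ξ‖ := by ring
    -- left multiplication estimate
    have hleft_bound : ∀ (n : ℕ) (l : Λ),
        ‖Q (n, l) * T - T‖ ≤
          (‖x‖ * ‖e l * a - a‖ + ‖Stmt19Aux.lpTail n x‖ * ‖a‖) * (‖y‖ * ‖b‖) := by
      intro n l
      have hnn : (0:ℝ) ≤ (‖x‖ * ‖e l * a - a‖ + ‖Stmt19Aux.lpTail n x‖ * ‖a‖) * (‖y‖ * ‖b‖) := by
        positivity
      refine ContinuousLinearMap.opNorm_le_bound _ hnn (fun ξ => ?_)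
      have hcoord : ∀ k, ((Q (n, l) * T - T) ξ) k
          = (if k ≤ n then e l ((T ξ) k) else 0) - (T ξ) k := by
        intro k
        have happ : (Q (n, l) * T - T) ξ = Q (n, l) (T ξ) - T ξ := by
          simp [ContinuousLinearMap.sub_apply, ContinuousLinearMap.mul_apply]
        rw [happ, lp.coeFn_sub, Pi.sub_apply, hQ n l (T ξ) k]
      have hC1 : (0:ℝ) ≤ ‖e l * a - a‖ * (‖y‖ * ‖b‖ * ‖ξ‖) := by positivity
      have hC2 : (0:ℝ) ≤ ‖a‖ * (‖y‖ * ‖b‖ * ‖ξ‖) := by positivity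
      have hmain : ‖(Q (n, l) * T - T) ξ‖ ≤
          ‖x‖ * (‖e l * a - a‖ * (‖y‖ * ‖b‖ * ‖ξ‖)) +
            ‖Stmt19Aux.lpTail n x‖ * (‖a‖ * (‖y‖ * ‖b‖ * ‖ξ‖)) := by
        refine Stmt19Aux.norm_le_two_term hpr1.le _ x n hC1 hC2 ?_ ?_
        · intro k hk
          rw [hcoord k, if_pos hk, hT ξ k]
          have h1 : e l (x k • a (∑' j, y j • b (ξ j))) - x k • a (∑' j, y j • b (ξ j))
              = x k • ((e l * a - a) (∑' j, y j • b (ξ j))) := by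
            rw [ContinuousLinearMap.sub_apply, ContinuousLinearMap.mul_apply, smul_sub,
              (e l).map_smul]
          rw [h1, norm_smul]
          refine mul_le_mul_of_nonneg_left ?_ (norm_nonneg _)
          calc ‖(e l * a - a) (∑' j, y j • b (ξ j))‖
              ≤ ‖e l * a - a‖ * ‖∑' j, y j • b (ξ j)‖ := ContinuousLinearMap.le_opNorm _ _
            _ ≤ ‖e l * a - a‖ * (‖y‖ * ‖b‖ * ‖ξ‖) :=
                mul_le_mul_of_nonneg_left (hsnorm ξ) (norm_nonneg _)
        · intro k hk
          rw [hcoord k, if_neg (not_le.mpr hk), hT ξ k, zero_sub, norm_neg, norm_smul]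
          refine mul_le_mul_of_nonneg_left ?_ (norm_nonneg _)
          calc ‖a (∑' j, y j • b (ξ j))‖ ≤ ‖a‖ * ‖∑' j, y j • b (ξ j)‖ := a.le_opNorm _
            _ ≤ ‖a‖ * (‖y‖ * ‖b‖ * ‖ξ‖) :=
                mul_le_mul_of_nonneg_left (hsnorm ξ) (norm_nonneg _)
      calc ‖(Q (n, l) * T - T) ξ‖
          ≤ ‖x‖ * (‖e l * a - a‖ * (‖y‖ * ‖b‖ * ‖ξ‖)) +
              ‖Stmt19Aux.lpTail n x‖ * (‖a‖ * (‖y‖ * ‖b‖ * ‖ξ‖)) := hmain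
        _ = (‖x‖ * ‖e l * a - a‖ + ‖Stmt19Aux.lpTail n x‖ * ‖a‖) * (‖y‖ * ‖b‖) * ‖ξ‖ := by
            ring
    -- right multiplication estimate
    have hright_bound : ∀ (n : ℕ) (l : Λ),
        ‖T * Q (n, l) - T‖ ≤
          ‖x‖ * ‖a‖ * (‖b * e l - b‖ * ‖y‖ + ‖b‖ * ‖Stmt19Aux.lpTail n y‖) := by
      intro n l
      have hnn : (0:ℝ) ≤ ‖x‖ * ‖a‖ * (‖b * e l - b‖ * ‖y‖ + ‖b‖ * ‖Stmt19Aux.lpTail n y‖) := by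
        positivity
      refine ContinuousLinearMap.opNorm_le_bound _ hnn (fun ξ => ?_)
      have hQξ : ∀ j, (Q (n, l) ξ) j = if j ≤ n then e l (ξ j) else 0 := hQ n l ξ
      have hsumB : Summable (fun j => y j • b (ξ j)) := hsummable ξ
      have hQn_ptwise : ∀ j, ‖y j • b ((Q (n, l) ξ) j)‖ ≤ ‖b‖ * (‖y j‖ * ‖ξ j‖) := by
        intro j
        rw [norm_smul, hQξ j]
        by_cases hj : j ≤ n
        · rw [if_pos hj]
          have h1 : ‖e l (ξ j)‖ ≤ ‖ξ j‖ := by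
            calc ‖e l (ξ j)‖ ≤ ‖e l‖ * ‖ξ j‖ := (e l).le_opNorm _
              _ ≤ 1 * ‖ξ j‖ := mul_le_mul_of_nonneg_right (he_contr l) (norm_nonneg _)
              _ = ‖ξ j‖ := one_mul _
          calc ‖y j‖ * ‖b (e l (ξ j))‖ ≤ ‖y j‖ * (‖b‖ * ‖e l (ξ j)‖) :=
                mul_le_mul_of_nonneg_left (b.le_opNorm _) (norm_nonneg _)
            _ ≤ ‖y j‖ * (‖b‖ * ‖ξ j‖) := by
                refine mul_le_mul_of_nonneg_left ?_ (norm_nonneg _)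
                exact mul_le_mul_of_nonneg_left h1 (norm_nonneg _)
            _ = ‖b‖ * (‖y j‖ * ‖ξ j‖) := by ring
        · rw [if_neg hj]
          simp only [map_zero, norm_zero, mul_zero]
          positivity
      have hsumA : Summable (fun j => y j • b ((Q (n, l) ξ) j)) :=
        Summable.of_norm (((Hyξ ξ).1.mul_left ‖b‖).of_nonneg_of_le
          (fun j => norm_nonneg _) hQn_ptwise)
      have Htail := Stmt19Aux.holder hconjR.symm (Stmt19Aux.lpTail n y) ξ
      have hdj : ∀ j, ‖y j • b ((Q (n, l) ξ) j) - y j • b (ξ j)‖ ≤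
          ‖b * e l - b‖ * (‖y j‖ * ‖ξ j‖) +
            ‖b‖ * (‖(Stmt19Aux.lpTail n y) j‖ * ‖ξ j‖) := by
        intro j
        rw [hQξ j]
        by_cases hj : j ≤ n
        · rw [if_pos hj]
          have h1 : y j • b (e l (ξ j)) - y j • b (ξ j) = y j • ((b * e l - b) (ξ j)) := by
            rw [ContinuousLinearMap.sub_apply, ContinuousLinearMap.mul_apply, smul_sub]
          rw [h1, norm_smul]
          have h2 : ‖y j‖ * ‖(b * e l - b) (ξ j)‖ ≤ ‖b * e l - b‖ * (‖y j‖ * ‖ξ j‖) := by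
            calc ‖y j‖ * ‖(b * e l - b) (ξ j)‖ ≤ ‖y j‖ * (‖b * e l - b‖ * ‖ξ j‖) :=
                  mul_le_mul_of_nonneg_left (ContinuousLinearMap.le_opNorm _ _) (norm_nonneg _)
              _ = ‖b * e l - b‖ * (‖y j‖ * ‖ξ j‖) := by ring
          have h3 : (0:ℝ) ≤ ‖b‖ * (‖(Stmt19Aux.lpTail n y) j‖ * ‖ξ j‖) := by positivity
          linarith
        · rw [if_neg hj]
          have h1 : y j • b 0 - y j • b (ξ j) = -(y j • b (ξ j)) := by simp
          rw [h1, norm_neg, norm_smul]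
          have h3 : ‖(Stmt19Aux.lpTail n y) j‖ = ‖y j‖ := by
            rw [Stmt19Aux.lpTail_apply, if_neg hj]
          have h2 : ‖y j‖ * ‖b (ξ j)‖ ≤ ‖b‖ * (‖(Stmt19Aux.lpTail n y) j‖ * ‖ξ j‖) := by
            rw [h3]
            calc ‖y j‖ * ‖b (ξ j)‖ ≤ ‖y j‖ * (‖b‖ * ‖ξ j‖) :=
                  mul_le_mul_of_nonneg_left (b.le_opNorm _) (norm_nonneg _)
              _ = ‖b‖ * (‖y j‖ * ‖ξ j‖) := by ring
          have h4 : (0:ℝ) ≤ ‖b * e l - b‖ * (‖y j‖ * ‖ξ j‖) := by positivity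
          linarith
      have hus : Summable (fun j => ‖b * e l - b‖ * (‖y j‖ * ‖ξ j‖)) :=
        (Hyξ ξ).1.mul_left _
      have hvs : Summable (fun j => ‖b‖ * (‖(Stmt19Aux.lpTail n y) j‖ * ‖ξ j‖)) :=
        Htail.1.mul_left _
      have hds : Summable (fun j => ‖y j • b ((Q (n, l) ξ) j) - y j • b (ξ j)‖) :=
        (hus.add hvs).of_nonneg_of_le (fun j => norm_nonneg _) hdj
      have hdiff : ‖(∑' j, y j • b ((Q (n, l) ξ) j)) - ∑' j, y j • b (ξ j)‖ ≤
          (‖b * e l - b‖ * ‖y‖ + ‖b‖ * ‖Stmt19Aux.lpTail n y‖) * ‖ξ‖ := by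
        have htsub : (∑' j, y j • b ((Q (n, l) ξ) j)) - ∑' j, y j • b (ξ j)
            = ∑' j, (y j • b ((Q (n, l) ξ) j) - y j • b (ξ j)) :=
          (hsumA.hasSum.sub hsumB.hasSum).tsum_eq.symm
        rw [htsub]
        calc ‖∑' j, (y j • b ((Q (n, l) ξ) j) - y j • b (ξ j))‖
            ≤ ∑' j, ‖y j • b ((Q (n, l) ξ) j) - y j • b (ξ j)‖ := norm_tsum_le_tsum_norm hds
          _ ≤ ∑' j, (‖b * e l - b‖ * (‖y j‖ * ‖ξ j‖) +
                ‖b‖ * (‖(Stmt19Aux.lpTail n y) j‖ * ‖ξ j‖)) :=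
              Summable.tsum_le_tsum hdj hds (hus.add hvs)
          _ = (∑' j, ‖b * e l - b‖ * (‖y j‖ * ‖ξ j‖)) +
                ∑' j, ‖b‖ * (‖(Stmt19Aux.lpTail n y) j‖ * ‖ξ j‖) := Summable.tsum_add hus hvs
          _ ≤ ‖b * e l - b‖ * (‖y‖ * ‖ξ‖) + ‖b‖ * (‖Stmt19Aux.lpTail n y‖ * ‖ξ‖) := by
              refine add_le_add ?_ ?_
              · rw [tsum_mul_left]
                exact mul_le_mul_of_nonneg_left (Hyξ ξ).2 (norm_nonneg _)
              · rw [tsum_mul_left]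
                exact mul_le_mul_of_nonneg_left Htail.2 (norm_nonneg _)
          _ = (‖b * e l - b‖ * ‖y‖ + ‖b‖ * ‖Stmt19Aux.lpTail n y‖) * ‖ξ‖ := by ring
      have hcoord : ∀ k, ((T * Q (n, l) - T) ξ) k =
          x k • (a ((∑' j, y j • b ((Q (n, l) ξ) j)) - ∑' j, y j • b (ξ j))) := by
        intro k
        have happ : (T * Q (n, l) - T) ξ = T (Q (n, l) ξ) - T ξ := by
          simp [ContinuousLinearMap.sub_apply, ContinuousLinearMap.mul_apply]
        rw [happ, lp.coeFn_sub, Pi.sub_apply, hT (Q (n, l) ξ) k, hT ξ k, ← smul_sub,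
          ← map_sub]
      have hk : ∀ k, ‖((T * Q (n, l) - T) ξ) k‖ ≤ ‖x k‖ *
          (‖a‖ * ((‖b * e l - b‖ * ‖y‖ + ‖b‖ * ‖Stmt19Aux.lpTail n y‖) * ‖ξ‖)) := by
        intro k
        rw [hcoord k, norm_smul]
        refine mul_le_mul_of_nonneg_left ?_ (norm_nonneg _)
        calc ‖a ((∑' j, y j • b ((Q (n, l) ξ) j)) - ∑' j, y j • b (ξ j))‖
            ≤ ‖a‖ * ‖(∑' j, y j • b ((Q (n, l) ξ) j)) - ∑' j, y j • b (ξ j)‖ := a.le_opNorm _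
          _ ≤ ‖a‖ * ((‖b * e l - b‖ * ‖y‖ + ‖b‖ * ‖Stmt19Aux.lpTail n y‖) * ‖ξ‖) :=
              mul_le_mul_of_nonneg_left hdiff (norm_nonneg _)
      have hC : (0:ℝ) ≤ ‖a‖ * ((‖b * e l - b‖ * ‖y‖ + ‖b‖ * ‖Stmt19Aux.lpTail n y‖) * ‖ξ‖) := by
        positivity
      calc ‖(T * Q (n, l) - T) ξ‖
          ≤ ‖x‖ * (‖a‖ * ((‖b * e l - b‖ * ‖y‖ + ‖b‖ * ‖Stmt19Aux.lpTail n y‖) * ‖ξ‖)) :=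
            Stmt19Aux.norm_le_mul_of_coords hpr _ x hC hk
        _ = ‖x‖ * ‖a‖ * (‖b * e l - b‖ * ‖y‖ + ‖b‖ * ‖Stmt19Aux.lpTail n y‖) * ‖ξ‖ := by ring
    -- limits of the bounds
    have hxtail : Tendsto (fun nl : ℕ × Λ => ‖Stmt19Aux.lpTail nl.1 x‖) atTop (𝓝 0) :=
      (Stmt19Aux.lpTail_tendsto hp' x).comp hfst
    have hytail : Tendsto (fun nl : ℕ × Λ => ‖Stmt19Aux.lpTail nl.1 y‖) atTop (𝓝 0) :=
      (Stmt19Aux.lpTail_tendsto hq' y).comp hfst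
    have hea : Tendsto (fun nl : ℕ × Λ => ‖e nl.2 * a - a‖) atTop (𝓝 0) :=
      (tendsto_iff_norm_sub_tendsto_zero.mp (he_left a haA)).comp hsnd
    have heb : Tendsto (fun nl : ℕ × Λ => ‖b * e nl.2 - b‖) atTop (𝓝 0) :=
      (tendsto_iff_norm_sub_tendsto_zero.mp (he_right b hbA)).comp hsnd
    constructor
    · rw [← tendsto_sub_nhds_zero_iff]
      have hG : Tendsto (fun nl : ℕ × Λ =>
          (‖x‖ * ‖e nl.2 * a - a‖ + ‖Stmt19Aux.lpTail nl.1 x‖ * ‖a‖) * (‖y‖ * ‖b‖))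
          atTop (𝓝 0) := by
        have h := ((hea.const_mul ‖x‖).add (hxtail.mul_const ‖a‖)).mul_const (‖y‖ * ‖b‖)
        simpa using h
      exact squeeze_zero_norm (fun nl => hleft_bound nl.1 nl.2) hG
    · rw [← tendsto_sub_nhds_zero_iff]
      have hG : Tendsto (fun nl : ℕ × Λ =>
          ‖x‖ * ‖a‖ * (‖b * e nl.2 - b‖ * ‖y‖ + ‖b‖ * ‖Stmt19Aux.lpTail nl.1 y‖))
          atTop (𝓝 0) := by
        have h := ((heb.mul_const ‖y‖).add (hytail.const_mul ‖b‖)).const_mul (‖x‖ * ‖a‖)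
        simpa using h
      exact squeeze_zero_norm (fun nl => hright_bound nl.1 nl.2) hG
  -- convergence on the span
  have hspan : ∀ u ∈ Submodule.span ℂ
      { T : lp (fun _ : ℕ => Lp ℂ p μ) p →L[ℂ] lp (fun _ : ℕ => Lp ℂ p μ) p |
        ∃ (x : lp (fun _ : ℕ => ℂ) p) (y : lp (fun _ : ℕ => ℂ) q)
          (a b : Lp ℂ p μ →L[ℂ] Lp ℂ p μ), a ∈ A ∧ b ∈ A ∧
          ∀ (ξ : lp (fun _ : ℕ => Lp ℂ p μ) p) (k : ℕ),
            (T ξ) k = x k • a (∑' j : ℕ, y j • b (ξ j)) },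
      Tendsto (fun nl => Q nl * u) atTop (𝓝 u) ∧
      Tendsto (fun nl => u * Q nl) atTop (𝓝 u) := by
    intro u hu
    induction hu using Submodule.span_induction with
    | mem T hT => exact hgen T hT
    | zero => simp only [mul_zero, zero_mul]; exact ⟨tendsto_const_nhds, tendsto_const_nhds⟩
    | add v w _ _ hv hw =>
      constructor
      · simpa only [mul_add] using hv.1.add hw.1
      · simpa only [add_mul] using hv.2.add hw.2
    | smul c v _ hv =>
      have h1 : ∀ nl : ℕ × Λ, Q nl * (c • v) = c • (Q nl * v) :=
        fun nl => mul_smul_comm c (Q nl) v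
      have h2 : ∀ nl : ℕ × Λ, (c • v) * Q nl = c • (v * Q nl) :=
        fun nl => smul_mul_assoc c v (Q nl)
      constructor
      · simp only [h1]; exact hv.1.const_smul c
      · simp only [h2]; exact hv.2.const_smul c
  -- convergence on the closure
  intro t ht
  have key : ∀ ε : ℝ, 0 < ε → ∃ N : ℕ × Λ, ∀ nl ≥ N,
      dist (Q nl * t) t < ε ∧ dist (t * Q nl) t < ε := by
    intro ε hε
    obtain ⟨u, humem, htu⟩ := Metric.mem_closure_iff.mp ht (ε / 3) (by linarith)
    have hu := hspan u humem
    obtain ⟨N1, hN1⟩ := (Metric.tendsto_atTop.mp hu.1) (ε / 3) (by linarith)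
    obtain ⟨N2, hN2⟩ := (Metric.tendsto_atTop.mp hu.2) (ε / 3) (by linarith)
    refine ⟨N1 ⊔ N2, fun nl hnl => ?_⟩
    have hQt : dist (Q nl * t) (Q nl * u) ≤ dist t u := by
      rw [dist_eq_norm, dist_eq_norm, ← mul_sub]
      calc ‖Q nl * (t - u)‖ ≤ ‖Q nl‖ * ‖t - u‖ := norm_mul_le _ _
        _ ≤ 1 * ‖t - u‖ := mul_le_mul_of_nonneg_right (hQnorm nl) (norm_nonneg _)
        _ = ‖t - u‖ := one_mul _
    have htQ : dist (t * Q nl) (u * Q nl) ≤ dist t u := by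
      rw [dist_eq_norm, dist_eq_norm, ← sub_mul]
      calc ‖(t - u) * Q nl‖ ≤ ‖t - u‖ * ‖Q nl‖ := norm_mul_le _ _
        _ ≤ ‖t - u‖ * 1 := mul_le_mul_of_nonneg_left (hQnorm nl) (norm_nonneg _)
        _ = ‖t - u‖ := mul_one _
    have hut : dist u t = dist t u := dist_comm u t
    have h1 := hN1 nl (le_trans le_sup_left hnl)
    have h2 := hN2 nl (le_trans le_sup_right hnl)
    constructor
    · calc dist (Q nl * t) t
          ≤ dist (Q nl * t) (Q nl * u) + dist (Q nl * u) u + dist u t := dist_triangle4 _ _ _ _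
        _ < ε := by rw [hut]; linarith
    · calc dist (t * Q nl) t
          ≤ dist (t * Q nl) (u * Q nl) + dist (u * Q nl) u + dist u t := dist_triangle4 _ _ _ _
        _ < ε := by rw [hut]; linarith
  constructor
  · rw [Metric.tendsto_atTop]
    intro ε hε
    obtain ⟨N, hN⟩ := key ε hε
    exact ⟨N, fun nl hnl => (hN nl hnl).1⟩
  · rw [Metric.tendsto_atTop]
    intro ε hε
    obtain ⟨N, hN⟩ := key ε hε
    exact ⟨N, fun nl hnl => (hN nl hnl).2⟩
end
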